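/- arXiv:2408.10005 — 4 statements merged into one kernel-verified Lean document; each statement's English description precedes it below -/
import Mathlib

section
/- Let q be a prime power, let k and s be positive integers, and let integers satisfy 0 = u_0 < u_1 < u_2 < ... < u_s ≤ k and 0 = v_0 ≤ v_1 ≤ v_2 ≤ ... ≤ v_s ≤ k with v_i ≤ u_i for all 1 ≤ i ≤ s. Let U_1 ⊆ U_2 ⊆ ... ⊆ U_s be F_q-linear subspaces of F_q^k with dim U_i = u_i for all i. Then the number of v_s-dimensional subspaces V of U_s such that dim(U_i ∩ V) = v_i for every 1 ≤ i ≤ s equals ∏_{i=1}^{s} q^{(u_{i-1}-v_{i-1})(v_i-v_{i-1})} · [u_i - u_{i-1} choose v_i - v_{i-1}]_q. -/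
open Finset

/-- The Hamming weight of a vector. -/
noncomputable def hwt {F : Type} [Zero F] {n : ℕ} (c : Fin n → F) : ℕ :=
  Nat.card {i : Fin n // c i ≠ 0}

/-- The subcode support weight of a subspace of `F^n`. -/
noncomputable def suppWt {F : Type} [Field F] {n : ℕ} (X : Submodule F (Fin n → F)) : ℕ :=
  Nat.card {i : Fin n // ∃ x ∈ X, x i ≠ 0}

/-- The minimum Hamming distance of a linear code. -/
noncomputable def minDist {F : Type} [Field F] {n : ℕ} (C : Submodule F (Fin n → F)) : ℕ :=
  sInf {w | ∃ c ∈ C, c ≠ 0 ∧ hwt c = w}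

/-- The `r`-th generalized Hamming weight of a linear code. -/
noncomputable def ghw {F : Type} [Field F] {n : ℕ} (C : Submodule F (Fin n → F)) (r : ℕ) : ℕ :=
  sInf {w | ∃ U : Submodule F (Fin n → F), U ≤ C ∧ Module.finrank F ↥U = r ∧ suppWt U = w}

/-- `sswd C r j` = the number of `r`-dimensional subspaces `U` of `C` with support weight `j`. -/
noncomputable def sswd {F : Type} [Field F] {n : ℕ} (C : Submodule F (Fin n → F)) (r j : ℕ) : ℕ :=
  Nat.card {U : Submodule F (Fin n → F) // U ≤ C ∧ Module.finrank F ↥U = r ∧ suppWt U = j}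

/-- `wdist C j` = the number of codewords of `C` of Hamming weight `j`. -/
noncomputable def wdist {F : Type} [Field F] {n : ℕ} (C : Submodule F (Fin n → F)) (j : ℕ) : ℕ :=
  Nat.card {c : Fin n → F // c ∈ C ∧ hwt c = j}

/-- The q-ary Gaussian binomial coefficient `[k choose r]_q`. -/
def gbinom (q k r : ℕ) : ℕ :=
  (∏ i ∈ Finset.range r, (q ^ k - q ^ i)) / (∏ i ∈ Finset.range r, (q ^ r - q ^ i))

/-- Ceiling division of naturals: `cdiv a b = ⌈a/b⌉`. -/
def cdiv (a b : ℕ) : ℕ := (a + b - 1) / b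


open Module Submodule

set_option linter.unusedSectionVars false


section Counting
variable {F : Type*} [Field F] [Fintype F]

local notation "qq" => Fintype.card F

lemma my_finite_submodule (M : Type*) [AddCommGroup M] [Module F M] [Finite M] :
    Finite (Submodule F M) :=
  Finite.of_injective (fun p => (p : Set M)) SetLike.coe_injective

lemma my_card_sigma {ι : Type*} [Fintype ι] (f : ι → Type*) [∀ i, Finite (f i)] :
    Nat.card (Σ i, f i) = ∑ i, Nat.card (f i) := by
  classical
  haveI := fun i => Fintype.ofFinite (f i)
  rw [Nat.card_eq_fintype_card, Fintype.card_sigma]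
  simp [Nat.card_eq_fintype_card]

lemma card_indep_all (V : Type*) [AddCommGroup V] [Module F V] [Finite V] (r : ℕ) :
    Nat.card {s : Fin r → V // LinearIndependent F s}
      = ∏ i ∈ range r, (qq ^ (finrank F V) - qq ^ i) := by
  haveI : Module.Finite F V := Module.Finite.of_finite
  rcases le_or_gt r (finrank F V) with h | h
  · rw [card_linearIndependent h]
    exact Fin.prod_univ_eq_prod_range (fun i => qq ^ finrank F V - qq ^ i) r
  · have : IsEmpty {s : Fin r → V // LinearIndependent F s} := by
      constructor; rintro ⟨s, hs⟩
      have := hs.fintype_card_le_finrank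
      simp only [Fintype.card_fin] at this; omega
    rw [Nat.card_of_isEmpty]
    symm
    exact Finset.prod_eq_zero (Finset.mem_range.2 h) (by simp)

variable {M : Type*} [AddCommGroup M] [Module F M] [Finite M]

lemma card_mul_eq_card_indep (r : ℕ) (P : Submodule F M → Prop)
    (hP : ∀ V, P V → finrank F ↥V = r) :
    Nat.card {W : Submodule F M // P W} * ∏ i ∈ range r, (qq ^ r - qq ^ i)
      = Nat.card {s : Fin r → M // LinearIndependent F s ∧ P (span F (Set.range s))} := by
  classical
  haveI : Module.Finite F M := Module.Finite.of_finite
  haveI := my_finite_submodule (F := F) M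
  haveI := Fintype.ofFinite {W : Submodule F M // P W}
  set T := {s : Fin r → M // LinearIndependent F s ∧ P (span F (Set.range s))} with hT
  let Φ : T → {W : Submodule F M // P W} := fun s => ⟨span F (Set.range s.1), s.2.2⟩
  have fib : ∀ W : {W : Submodule F M // P W},
      {s : T // Φ s = W} ≃ {t : Fin r → ↥W.1 // LinearIndependent F t} := by
    intro W
    refine ⟨fun s => ⟨fun i => ⟨s.1.1 i, ?_⟩, ?_⟩, fun t => ⟨⟨fun i => (t.1 i : M), ?_, ?_⟩, ?_⟩,
      fun s => ?_, fun t => ?_⟩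
    · have : span F (Set.range s.1.1) = W.1 := congrArg Subtype.val s.2
      rw [← this]
      exact subset_span (Set.mem_range_self i)
    · apply LinearIndependent.of_comp W.1.subtype
      exact s.1.2.1
    · exact t.2.map' W.1.subtype (ker_subtype W.1)
    · have hsp : span F (Set.range fun i => (t.1 i : M)) = W.1 := by
        have h1 : (Set.range fun i => (t.1 i : M)) = W.1.subtype '' Set.range t.1 := by
          rw [← Set.range_comp]; rfl
        rw [h1, Submodule.span_image]
        have h2 : span F (Set.range t.1) = ⊤ := by
          apply Submodule.eq_top_of_finrank_eq
          rw [finrank_span_eq_card t.2, Fintype.card_fin, hP W.1 W.2]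
        rw [h2, Submodule.map_subtype_top]
      rw [hsp]; exact W.2
    · apply Subtype.ext
      have hsp : span F (Set.range fun i => (t.1 i : M)) = W.1 := by
        have h1 : (Set.range fun i => (t.1 i : M)) = W.1.subtype '' Set.range t.1 := by
          rw [← Set.range_comp]; rfl
        rw [h1, Submodule.span_image]
        have h2 : span F (Set.range t.1) = ⊤ := by
          apply Submodule.eq_top_of_finrank_eq
          rw [finrank_span_eq_card t.2, Fintype.card_fin, hP W.1 W.2]
        rw [h2, Submodule.map_subtype_top]
      exact hsp
    · apply Subtype.ext; apply Subtype.ext; funext i; rfl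
    · apply Subtype.ext; funext i; apply Subtype.ext; rfl
  have e : (Σ W : {W : Submodule F M // P W}, {s : T // Φ s = W}) ≃ T := Equiv.sigmaFiberEquiv Φ
  have h1 : Nat.card T = ∑ W : {W : Submodule F M // P W},
      Nat.card {t : Fin r → ↥W.1 // LinearIndependent F t} := by
    rw [← Nat.card_congr e, my_card_sigma]
    exact Finset.sum_congr rfl fun W _ => Nat.card_congr (fib W)
  rw [h1]
  have h2 : ∀ W : {W : Submodule F M // P W},
      Nat.card {t : Fin r → ↥W.1 // LinearIndependent F t} = ∏ i ∈ range r, (qq ^ r - qq ^ i) := by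
    intro W
    rw [card_indep_all, hP W.1 W.2]
  rw [Finset.sum_congr rfl fun W _ => h2 W, Finset.sum_const, Finset.card_univ, smul_eq_mul,
    Nat.card_eq_fintype_card]

lemma Dpos (r : ℕ) : 0 < ∏ i ∈ range r, (qq ^ r - qq ^ i) := by
  apply Finset.prod_pos
  intro i hi
  have h1 : 1 < qq := Fintype.one_lt_card
  have := Nat.pow_lt_pow_right h1 (Finset.mem_range.1 hi)
  omega

lemma card_dim_eq_mul (r : ℕ) :
    Nat.card {W : Submodule F M // finrank F ↥W = r} * ∏ i ∈ range r, (qq ^ r - qq ^ i)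
      = ∏ i ∈ range r, (qq ^ (finrank F M) - qq ^ i) := by
  rw [card_mul_eq_card_indep r _ (fun V h => h), ← card_indep_all M r]
  apply Nat.card_congr
  apply Equiv.subtypeEquivRight
  intro s
  constructor
  · rintro ⟨h, _⟩; exact h
  · intro h; exact ⟨h, by rw [finrank_span_eq_card h, Fintype.card_fin]⟩

lemma gbinom_mul_eq (n r : ℕ) :
    gbinom qq n r * ∏ i ∈ range r, (qq ^ r - qq ^ i) = ∏ i ∈ range r, (qq ^ n - qq ^ i) := by
  have h := card_dim_eq_mul (F := F) (M := Fin n → F) r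
  rw [Module.finrank_fintype_fun_eq_card, Fintype.card_fin] at h
  have hg : gbinom qq n r = Nat.card {W : Submodule F (Fin n → F) // finrank F ↥W = r} := by
    unfold gbinom
    rw [← h]
    exact Nat.mul_div_cancel _ (Dpos r)
  rw [hg, h]

lemma card_dim_eq (r : ℕ) :
    Nat.card {W : Submodule F M // finrank F ↥W = r} = gbinom qq (finrank F M) r :=
  Nat.eq_of_mul_eq_mul_right (Dpos r) (by rw [card_dim_eq_mul, gbinom_mul_eq])

lemma cardB (A : Submodule F M) (r : ℕ) :
    Nat.card {V : Submodule F M // A ⊓ V = ⊥ ∧ finrank F ↥V = r}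
      = qq ^ (finrank F ↥A * r) * gbinom qq (finrank F M - finrank F ↥A) r := by
  classical
  haveI : Module.Finite F M := Module.Finite.of_finite
  haveI : Finite (M ⧸ A) := Finite.of_surjective _ (Submodule.mkQ_surjective A)
  have h1 := card_mul_eq_card_indep r (fun V => A ⊓ V = ⊥ ∧ finrank F ↥V = r) (fun V h => h.2)
  -- identify with tuples independent mod A
  have e1 : {s : Fin r → M // LinearIndependent F s ∧ A ⊓ span F (Set.range s) = ⊥ ∧
        finrank F ↥(span F (Set.range s)) = r}
      ≃ {s : Fin r → M // LinearIndependent F (⇑A.mkQ ∘ s)} := by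
    apply Equiv.subtypeEquivRight
    intro s
    constructor
    · rintro ⟨hs, hA, _⟩
      apply hs.map
      rw [Submodule.ker_mkQ]
      exact disjoint_iff.2 (by rw [inf_comm]; exact hA)
    · intro h
      have hs := LinearIndependent.of_comp _ h
      have hd := Submodule.range_ker_disjoint h
      rw [Submodule.ker_mkQ] at hd
      refine ⟨hs, by rw [inf_comm]; exact disjoint_iff.1 hd, ?_⟩
      rw [finrank_span_eq_card hs, Fintype.card_fin]
  rw [Nat.card_congr e1] at h1
  -- fibration over independent tuples in the quotient
  haveI := Fintype.ofFinite {t : Fin r → M ⧸ A // LinearIndependent F t}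
  set S := {s : Fin r → M // LinearIndependent F (⇑A.mkQ ∘ s)} with hS
  let Ψ : S → {t : Fin r → M ⧸ A // LinearIndependent F t} := fun s => ⟨⇑A.mkQ ∘ s.1, s.2⟩
  have fib : ∀ t : {t : Fin r → M ⧸ A // LinearIndependent F t},
      {s : S // Ψ s = t} ≃ (Fin r → ↥A) := by
    intro t
    have hg : ∀ i, ∃ x : M, A.mkQ x = t.1 i := fun i => Submodule.mkQ_surjective A (t.1 i)
    choose g hg using hg
    have hgt : ⇑A.mkQ ∘ g = t.1 := funext hg
    refine ⟨fun s => fun i => ⟨s.1.1 i - g i, ?_⟩, fun a => ⟨⟨fun i => g i + (a i : M), ?_⟩, ?_⟩,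
      fun s => ?_, fun a => ?_⟩
    · have hst : ⇑A.mkQ ∘ s.1.1 = t.1 := congrArg Subtype.val s.2
      have : A.mkQ (s.1.1 i - g i) = 0 := by
        rw [map_sub]
        have h1 : A.mkQ (s.1.1 i) = t.1 i := congrFun hst i
        have h2 : A.mkQ (g i) = t.1 i := hg i
        rw [h1, h2, sub_self]
      rwa [← LinearMap.mem_ker, Submodule.ker_mkQ] at this
    · have : ⇑A.mkQ ∘ (fun i => g i + (a i : M)) = t.1 := by
        funext i
        simp only [Function.comp_apply, map_add]
        have : A.mkQ (a i : M) = 0 := by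
          rw [← LinearMap.mem_ker, Submodule.ker_mkQ]; exact (a i).2
        rw [this, add_zero, hg i]
      rw [this]; exact t.2
    · apply Subtype.ext
      funext i
      simp only [Ψ, Function.comp_apply, map_add]
      have : A.mkQ (a i : M) = 0 := by
        rw [← LinearMap.mem_ker, Submodule.ker_mkQ]; exact (a i).2
      rw [this, add_zero, hg i]
    · apply Subtype.ext; apply Subtype.ext; funext i; simp
    · funext i; apply Subtype.ext; simp
  have e2 : (Σ t : {t : Fin r → M ⧸ A // LinearIndependent F t}, {s : S // Ψ s = t}) ≃ S :=
    Equiv.sigmaFiberEquiv Ψ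
  have h2 : Nat.card S = Nat.card {t : Fin r → M ⧸ A // LinearIndependent F t}
      * qq ^ (finrank F ↥A * r) := by
    rw [← Nat.card_congr e2, my_card_sigma]
    have : ∀ t : {t : Fin r → M ⧸ A // LinearIndependent F t},
        Nat.card {s : S // Ψ s = t} = qq ^ (finrank F ↥A * r) := by
      intro t
      rw [Nat.card_congr (fib t)]
      haveI := Fintype.ofFinite (↥A)
      rw [Nat.card_eq_fintype_card, Fintype.card_fun, card_eq_pow_finrank (K := F) (V := ↥A),
        Fintype.card_fin, ← pow_mul]
    rw [Finset.sum_congr rfl fun t _ => this t, Finset.sum_const, Finset.card_univ, smul_eq_mul,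
      Nat.card_eq_fintype_card, mul_comm]
  have hQdim : finrank F (M ⧸ A) = finrank F M - finrank F ↥A := by
    have := Submodule.finrank_quotient_add_finrank A
    omega
  rw [h2, card_indep_all (M ⧸ A) r, hQdim] at h1
  apply Nat.eq_of_mul_eq_mul_right (Dpos (F := F) r)
  rw [h1, mul_assoc, gbinom_mul_eq, mul_comm]

lemma finrank_map_mkQ (W V : Submodule F M) (h : W ≤ V) :
    finrank F ↥(Submodule.map W.mkQ V) + finrank F ↥W = finrank F ↥V := by
  haveI : Module.Finite F M := Module.Finite.of_finite
  have hr : LinearMap.range (W.mkQ.comp V.subtype) = Submodule.map W.mkQ V := by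
    rw [LinearMap.range_comp, Submodule.range_subtype]
  have hk : LinearMap.ker (W.mkQ.comp V.subtype) = Submodule.comap V.subtype W := by
    rw [LinearMap.ker_comp, Submodule.ker_mkQ]
  have := LinearMap.finrank_range_add_finrank_ker (W.mkQ.comp V.subtype)
  rw [hr, hk] at this
  rwa [(Submodule.comapSubtypeEquivOfLe h).finrank_eq] at this

lemma cardC (A W : Submodule F M) (hWA : W ≤ A) (v : ℕ) (hwv : finrank F ↥W ≤ v) :
    Nat.card {V : Submodule F M // A ⊓ V = W ∧ finrank F ↥V = v}
      = qq ^ ((finrank F ↥A - finrank F ↥W) * (v - finrank F ↥W)) *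
          gbinom qq (finrank F M - finrank F ↥A) (v - finrank F ↥W) := by
  classical
  haveI : Module.Finite F M := Module.Finite.of_finite
  haveI : Finite (M ⧸ W) := Finite.of_surjective _ (Submodule.mkQ_surjective W)
  set π := W.mkQ with hπ
  have hπs : Function.Surjective ⇑π := Submodule.mkQ_surjective W
  set A' := Submodule.map π A with hA'
  have hA'r : finrank F ↥A' + finrank F ↥W = finrank F ↥A := finrank_map_mkQ W A hWA
  have hcA : Submodule.comap π A' = A := by
    rw [hA', hπ, Submodule.comap_map_mkQ, sup_eq_right.2 hWA]
  have e : {V : Submodule F M // A ⊓ V = W ∧ finrank F ↥V = v}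
      ≃ {V' : Submodule F (M ⧸ W) // A' ⊓ V' = ⊥ ∧ finrank F ↥V' = v - finrank F ↥W} := by
    refine ⟨fun V => ⟨Submodule.map π V.1, ?_, ?_⟩, fun V' => ⟨Submodule.comap π V'.1, ?_, ?_⟩,
      fun V => ?_, fun V' => ?_⟩
    · have hWV : W ≤ V.1 := V.2.1.symm.trans_le inf_le_right
      apply Submodule.comap_injective_of_surjective hπs
      rw [Submodule.comap_inf, hcA, hπ, Submodule.comap_map_mkQ, sup_eq_right.2 hWV,
        Submodule.comap_bot, Submodule.ker_mkQ, V.2.1]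
    · have hWV : W ≤ V.1 := V.2.1.symm.trans_le inf_le_right
      have h9 := finrank_map_mkQ W V.1 hWV
      rw [V.2.2] at h9
      exact Nat.eq_sub_of_add_eq h9
    · rw [← hcA, ← Submodule.comap_inf, V'.2.1, Submodule.comap_bot, hπ, Submodule.ker_mkQ]
    · have hWle : W ≤ Submodule.comap π V'.1 := by
        intro x hx
        rw [Submodule.mem_comap, hπ, Submodule.mkQ_apply, (Submodule.Quotient.mk_eq_zero W).2 hx]
        exact V'.1.zero_mem
      have h1 := finrank_map_mkQ W (Submodule.comap π V'.1) hWle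
      rw [Submodule.map_comap_eq_of_surjective hπs, V'.2.2] at h1
      rw [← h1]
      exact Nat.sub_add_cancel hwv
    · apply Subtype.ext
      have hWV : W ≤ V.1 := V.2.1.symm.trans_le inf_le_right
      simp only
      rw [hπ, Submodule.comap_map_mkQ, sup_eq_right.2 hWV]
    · apply Subtype.ext
      simp only
      rw [Submodule.map_comap_eq_of_surjective hπs]
  rw [Nat.card_congr e, cardB A' (v - finrank F ↥W)]
  have hwa : finrank F ↥W ≤ finrank F ↥A := Submodule.finrank_mono hWA
  have ham : finrank F ↥A ≤ finrank F M := Submodule.finrank_le A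
  have hA'rank : finrank F ↥A' = finrank F ↥A - finrank F ↥W := Nat.eq_sub_of_add_eq hA'r
  have hQrank : finrank F (M ⧸ W) = finrank F M - finrank F ↥W :=
    Nat.eq_sub_of_add_eq (Submodule.finrank_quotient_add_finrank W)
  rw [hA'rank, hQrank]
  congr 2
  omega

lemma cardA' (B : Submodule F M) (r : ℕ) :
    Nat.card {V : Submodule F M // V ≤ B ∧ finrank F ↥V = r} = gbinom qq (finrank F ↥B) r := by
  classical
  haveI : Module.Finite F M := Module.Finite.of_finite
  have e : {V : Submodule F M // V ≤ B ∧ finrank F ↥V = r}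
      ≃ {V' : Submodule F ↥B // finrank F ↥V' = r} := by
    refine ⟨fun V => ⟨Submodule.comap B.subtype V.1, ?_⟩, fun V' => ⟨Submodule.map B.subtype V'.1,
      Submodule.map_subtype_le B V'.1, ?_⟩, fun V => ?_, fun V' => ?_⟩
    · rw [(Submodule.comapSubtypeEquivOfLe V.2.1).finrank_eq, V.2.2]
    · rw [Submodule.finrank_map_subtype_eq, V'.2]
    · apply Subtype.ext
      simp only
      rw [Submodule.map_comap_subtype, inf_of_le_right V.2.1]
    · apply Subtype.ext
      simp only
      rw [Submodule.comap_map_eq, Submodule.ker_subtype, sup_bot_eq]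
  rw [Nat.card_congr e, card_dim_eq]

lemma cardC' (B A W : Submodule F M) (hAB : A ≤ B) (hWA : W ≤ A) (v : ℕ)
    (hwv : finrank F ↥W ≤ v) :
    Nat.card {V : Submodule F M // V ≤ B ∧ A ⊓ V = W ∧ finrank F ↥V = v}
      = qq ^ ((finrank F ↥A - finrank F ↥W) * (v - finrank F ↥W)) *
          gbinom qq (finrank F ↥B - finrank F ↥A) (v - finrank F ↥W) := by
  classical
  haveI : Module.Finite F M := Module.Finite.of_finite
  have hWB : W ≤ B := le_trans hWA hAB
  have hinj : Function.Injective ⇑B.subtype := Subtype.val_injective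
  have hmc : ∀ X : Submodule F M, X ≤ B →
      Submodule.map B.subtype (Submodule.comap B.subtype X) = X := by
    intro X hX
    rw [Submodule.map_comap_subtype, inf_of_le_right hX]
  have e : {V : Submodule F M // V ≤ B ∧ A ⊓ V = W ∧ finrank F ↥V = v}
      ≃ {V' : Submodule F ↥B // (Submodule.comap B.subtype A) ⊓ V' = Submodule.comap B.subtype W ∧
          finrank F ↥V' = v} := by
    refine ⟨fun V => ⟨Submodule.comap B.subtype V.1, ?_, ?_⟩,
      fun V' => ⟨Submodule.map B.subtype V'.1, Submodule.map_subtype_le B V'.1, ?_, ?_⟩,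
      fun V => ?_, fun V' => ?_⟩
    · rw [← Submodule.comap_inf, V.2.2.1]
    · rw [(Submodule.comapSubtypeEquivOfLe V.2.1).finrank_eq, V.2.2.2]
    · have := congrArg (Submodule.map B.subtype) V'.2.1
      rwa [Submodule.map_inf _ hinj, hmc A hAB, hmc W hWB] at this
    · rw [Submodule.finrank_map_subtype_eq, V'.2.2]
    · apply Subtype.ext
      simp only
      exact hmc V.1 V.2.1
    · apply Subtype.ext
      simp only
      rw [Submodule.comap_map_eq, Submodule.ker_subtype, sup_bot_eq]
  have hWrank : finrank F ↥(Submodule.comap B.subtype W) = finrank F ↥W :=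
    (Submodule.comapSubtypeEquivOfLe hWB).finrank_eq
  have hArank : finrank F ↥(Submodule.comap B.subtype A) = finrank F ↥A :=
    (Submodule.comapSubtypeEquivOfLe hAB).finrank_eq
  rw [Nat.card_congr e, cardC (Submodule.comap B.subtype A) (Submodule.comap B.subtype W)
    (Submodule.comap_mono hWA) v (by rwa [hWrank]), hWrank, hArank]
end Counting
section Main
variable {F : Type} [Field F] [Fintype F]

lemma main_aux (k : ℕ) (s : ℕ) (hs : 1 ≤ s) :
    ∀ (u v : ℕ → ℕ) (U : ℕ → Submodule F (Fin k → F)),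
    u 0 = 0 → v 0 = 0 →
    (∀ i ∈ Finset.Icc 1 s, u (i - 1) < u i) → u s ≤ k →
    (∀ i ∈ Finset.Icc 1 s, v (i - 1) ≤ v i) → v s ≤ k →
    (∀ i ∈ Finset.Icc 1 s, v i ≤ u i) →
    (∀ i ∈ Finset.Icc 1 s, finrank F ↥(U i) = u i) →
    (∀ i ∈ Finset.Icc 1 s, ∀ j ∈ Finset.Icc 1 s, i ≤ j → U i ≤ U j) →
    Nat.card {V : Submodule F (Fin k → F) //
        V ≤ U s ∧ finrank F ↥V = v s ∧
        ∀ i ∈ Finset.Icc 1 s, finrank F ↥(U i ⊓ V) = v i} =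
      ∏ i ∈ Finset.Icc 1 s,
        (Fintype.card F) ^ ((u (i - 1) - v (i - 1)) * (v i - v (i - 1))) *
          gbinom (Fintype.card F) (u i - u (i - 1)) (v i - v (i - 1)) := by
  induction s, hs using Nat.le_induction with
  | base =>
    intro u v U hu0 hv0 humono husk hvmono hvsk hvu hUdim hUchain
    have h1 : (1 : ℕ) ∈ Finset.Icc 1 1 := by simp
    have e : {V : Submodule F (Fin k → F) //
          V ≤ U 1 ∧ finrank F ↥V = v 1 ∧
          ∀ i ∈ Finset.Icc 1 1, finrank F ↥(U i ⊓ V) = v i}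
        ≃ {V : Submodule F (Fin k → F) // V ≤ U 1 ∧ finrank F ↥V = v 1} := by
      apply Equiv.subtypeEquivRight
      intro V
      constructor
      · rintro ⟨hV, hrk, _⟩; exact ⟨hV, hrk⟩
      · rintro ⟨hV, hrk⟩
        refine ⟨hV, hrk, fun i hi => ?_⟩
        have : i = 1 := by simp at hi; omega
        subst this
        rw [inf_eq_right.2 hV, hrk]
    rw [Nat.card_congr e, cardA' (U 1) (v 1), hUdim 1 h1]
    simp [hu0, hv0]
  | succ s hs ih =>
    intro u v U hu0 hv0 humono husk hvmono hvsk hvu hUdim hUchain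
    have hsub : Finset.Icc 1 s ⊆ Finset.Icc 1 (s + 1) :=
      Finset.Icc_subset_Icc_right (by omega)
    have hsmem : s ∈ Finset.Icc 1 (s + 1) := by simp; omega
    have hs1mem : s + 1 ∈ Finset.Icc 1 (s + 1) := by simp
    have hAB : U s ≤ U (s + 1) := hUchain s hsmem (s + 1) hs1mem (Nat.le_succ s)
    haveI := my_finite_submodule (F := F) (Fin k → F)
    haveI := Fintype.ofFinite {W : Submodule F (Fin k → F) //
        W ≤ U s ∧ finrank F ↥W = v s ∧
        ∀ i ∈ Finset.Icc 1 s, finrank F ↥(U i ⊓ W) = v i}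
    set WT := {W : Submodule F (Fin k → F) //
        W ≤ U s ∧ finrank F ↥W = v s ∧
        ∀ i ∈ Finset.Icc 1 s, finrank F ↥(U i ⊓ W) = v i} with hWT
    set ST := {V : Submodule F (Fin k → F) //
        V ≤ U (s + 1) ∧ finrank F ↥V = v (s + 1) ∧
        ∀ i ∈ Finset.Icc 1 (s + 1), finrank F ↥(U i ⊓ V) = v i} with hST
    have hinfW : ∀ V : ST, (U s ⊓ V.1) ≤ U s ∧ finrank F ↥(U s ⊓ V.1) = v s ∧
        ∀ i ∈ Finset.Icc 1 s, finrank F ↥(U i ⊓ (U s ⊓ V.1)) = v i := by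
      intro V
      refine ⟨inf_le_left, V.2.2.2 s hsmem, fun i hi => ?_⟩
      have hiS : U i ≤ U s := hUchain i (hsub hi) s hsmem (by simp at hi; omega)
      rw [← inf_assoc, inf_eq_left.2 hiS]
      exact V.2.2.2 i (hsub hi)
    let Φ : ST → WT := fun V => ⟨U s ⊓ V.1, hinfW V⟩
    have fib : ∀ W : WT, {V : ST // Φ V = W} ≃
        {V : Submodule F (Fin k → F) //
          V ≤ U (s + 1) ∧ (U s) ⊓ V = W.1 ∧ finrank F ↥V = v (s + 1)} := by
      intro W
      refine ⟨fun x => ⟨x.1.1, x.1.2.1, congrArg Subtype.val x.2, x.1.2.2.1⟩,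
        fun y => ⟨⟨y.1, y.2.1, y.2.2.2, fun i hi => ?_⟩, Subtype.ext y.2.2.1⟩,
        fun x => ?_, fun y => ?_⟩
      · rcases Finset.mem_Icc.1 hi with ⟨hi1, hi2⟩
        by_cases hieq : i = s + 1
        · subst hieq
          rw [inf_eq_right.2 y.2.1, y.2.2.2]
        · have his : i ≤ s := by omega
          have hiS : U i ≤ U s := hUchain i (hsub (Finset.mem_Icc.2 ⟨hi1, his⟩)) s hsmem his
          rw [← inf_eq_left.2 hiS, inf_assoc, y.2.2.1]
          exact W.2.2.2 i (Finset.mem_Icc.2 ⟨hi1, his⟩)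
      · apply Subtype.ext; apply Subtype.ext; rfl
      · apply Subtype.ext; rfl
    have e2 : (Σ W : WT, {V : ST // Φ V = W}) ≃ ST := Equiv.sigmaFiberEquiv Φ
    have hcards : Nat.card ST = Nat.card WT *
        ((Fintype.card F) ^ ((u s - v s) * (v (s + 1) - v s)) *
          gbinom (Fintype.card F) (u (s + 1) - u s) (v (s + 1) - v s)) := by
      rw [← Nat.card_congr e2, my_card_sigma]
      have hfW : ∀ W : WT, Nat.card {V : ST // Φ V = W} =
          (Fintype.card F) ^ ((u s - v s) * (v (s + 1) - v s)) *
            gbinom (Fintype.card F) (u (s + 1) - u s) (v (s + 1) - v s) := by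
        intro W
        rw [Nat.card_congr (fib W)]
        rw [cardC' (U (s + 1)) (U s) W.1 hAB W.2.1 (v (s + 1))
          (by rw [W.2.2.1]; exact hvmono (s + 1) hs1mem)]
        rw [W.2.2.1, hUdim s hsmem, hUdim (s + 1) hs1mem]
      rw [Finset.sum_congr rfl fun W _ => hfW W, Finset.sum_const, Finset.card_univ,
        smul_eq_mul, Nat.card_eq_fintype_card]
    rw [hcards]
    have hIH := ih u v U hu0 hv0
      (fun i hi => humono i (hsub hi))
      (le_of_lt (lt_of_lt_of_le (humono (s + 1) hs1mem) husk))
      (fun i hi => hvmono i (hsub hi))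
      (le_trans (hvmono (s + 1) hs1mem) hvsk)
      (fun i hi => hvu i (hsub hi))
      (fun i hi => hUdim i (hsub hi))
      (fun i hi j hj hij => hUchain i (hsub hi) j (hsub hj) hij)
    rw [← hWT] at hIH
    rw [hIH, Finset.prod_Icc_succ_top (by omega : 1 ≤ s + 1)]
    simp
end Main

/-- Lemma `num` (b): counting subspaces with prescribed intersection
dimensions along a chain of subspaces. -/
theorem stmt_0 (q : ℕ) (F : Type) [Field F] [Fintype F] (hq : Fintype.card F = q)
    (k s : ℕ) (hs : 1 ≤ s) (u v : ℕ → ℕ)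
    (hu0 : u 0 = 0) (hv0 : v 0 = 0)
    (humono : ∀ i ∈ Finset.Icc 1 s, u (i - 1) < u i)
    (husk : u s ≤ k)
    (hvmono : ∀ i ∈ Finset.Icc 1 s, v (i - 1) ≤ v i)
    (hvsk : v s ≤ k)
    (hvu : ∀ i ∈ Finset.Icc 1 s, v i ≤ u i)
    (U : ℕ → Submodule F (Fin k → F))
    (hUdim : ∀ i ∈ Finset.Icc 1 s, Module.finrank F ↥(U i) = u i)
    (hUchain : ∀ i ∈ Finset.Icc 1 s, ∀ j ∈ Finset.Icc 1 s, i ≤ j → U i ≤ U j) :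
    Nat.card {V : Submodule F (Fin k → F) //
        V ≤ U s ∧ Module.finrank F ↥V = v s ∧
        ∀ i ∈ Finset.Icc 1 s, Module.finrank F ↥(U i ⊓ V) = v i} =
      ∏ i ∈ Finset.Icc 1 s,
        q ^ ((u (i - 1) - v (i - 1)) * (v i - v (i - 1))) *
          gbinom q (u i - u (i - 1)) (v i - v (i - 1)) := by
  subst hq
  exact main_aux k s hs u v U hu0 hv0 humono husk hvmono hvsk hvu hUdim hUchain
end

section
/- Let q be a prime power and let integers satisfy 0 = u_0 < u_1 < u_2 < ... < u_s < u_{s+1} = k and 1 ≤ s ≤ t. Set n = t(q^k - 1)/(q - 1) - Σ_{i=1}^{s} (q^{u_i} - 1)/(q - 1) and d = t·q^{k-1} - Σ_{i=1}^{s} q^{u_i - 1}. Then there exists an [n,k]_q linear code C with minimum Hamming distance d whose weight distribution is: A_0(C) = 1; for each 0 ≤ l ≤ s, A_{w_l}(C) = q^{k - u_l} - q^{k - u_{l+1}} where w_l = d + Σ_{i=1}^{l} q^{u_i - 1} (so in particular A_{w_s}(C) = q^{k-u_s} - 1 since u_{s+1} = k); and A_j(C) = 0 for every other j. -/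
open Finset Projectivization
open scoped LinearAlgebra.Projectivization

noncomputable def projCountEquiv (K V : Type*) [Field K] [AddCommGroup V] [Module K V]
    (Q : V → Prop) (hQ : ∀ (c : Kˣ) (x : V), Q x → Q ((c : K) • x)) :
    Kˣ × {p : ℙ K V // Q p.rep} ≃ {x : V // x ≠ 0 ∧ Q x} where
  toFun cp := ⟨(cp.1 : K) • cp.2.1.rep,
    smul_ne_zero cp.1.ne_zero cp.2.1.rep_nonzero, hQ cp.1 _ cp.2.2⟩
  invFun x :=
    let a := Classical.choose (exists_smul_eq_mk_rep K x.1 x.2.1)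
    (a⁻¹, ⟨Projectivization.mk K x.1 x.2.1, by
      have h : a • x.1 = (Projectivization.mk K x.1 x.2.1).rep :=
        Classical.choose_spec (exists_smul_eq_mk_rep K x.1 x.2.1)
      rw [Units.smul_def] at h
      rw [← h]; exact hQ a x.1 x.2.2⟩)
  left_inv := by
    rintro ⟨c, p, hp⟩
    have hrep := p.rep_nonzero
    have hmk : Projectivization.mk K ((c : K) • p.rep) (smul_ne_zero c.ne_zero hrep) = p := by
      conv_rhs => rw [← p.mk_rep]
      rw [mk_eq_mk_iff']
      exact ⟨c, rfl⟩
    have hspec : Classical.choose (exists_smul_eq_mk_rep K ((c : K) • p.rep)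
        (smul_ne_zero c.ne_zero hrep)) • ((c : K) • p.rep) =
        (Projectivization.mk K ((c : K) • p.rep) (smul_ne_zero c.ne_zero hrep)).rep :=
      Classical.choose_spec (exists_smul_eq_mk_rep K ((c : K) • p.rep)
        (smul_ne_zero c.ne_zero hrep))
    set a := Classical.choose (exists_smul_eq_mk_rep K ((c : K) • p.rep)
        (smul_ne_zero c.ne_zero hrep)) with ha
    rw [hmk, Units.smul_def] at hspec
    have hac : ((a * c : Kˣ) : K) • p.rep = (1 : K) • p.rep := by
      rw [one_smul, Units.val_mul, mul_smul]; exact hspec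
    have h1 : ((a * c : Kˣ) : K) = (1 : K) := smul_left_injective K hrep hac
    have h1' : (a * c : Kˣ) = 1 := Units.ext (by simpa using h1)
    have hainv : a⁻¹ = c := by
      have h2 := congrArg (a⁻¹ * ·) h1'
      simp only [← mul_assoc, inv_mul_cancel, one_mul, mul_one] at h2
      exact h2.symm
    simp only [Prod.mk.injEq, Subtype.mk.injEq]
    exact ⟨hainv, hmk⟩
  right_inv := by
    rintro ⟨x, hx0, hxQ⟩
    have hspec : Classical.choose (exists_smul_eq_mk_rep K x hx0) • x =
        (Projectivization.mk K x hx0).rep :=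
      Classical.choose_spec (exists_smul_eq_mk_rep K x hx0)
    simp only [Subtype.mk.injEq]
    rw [← Units.smul_def]
    exact inv_smul_eq_iff.mpr hspec.symm
open Finset

variable {F : Type} [Field F] [Fintype F]

/-- dot product as a linear map -/
def dotL {m : ℕ} (f : Fin m → F) : (Fin m → F) →ₗ[F] F where
  toFun x := ∑ j, f j * x j
  map_add' x y := by simp [mul_add, Finset.sum_add_distrib]
  map_smul' c x := by simp [Finset.mul_sum, mul_left_comm]

lemma card_fun {q : ℕ} (hq : Fintype.card F = q) (m : ℕ) : Nat.card (Fin m → F) = q ^ m := by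
  simp [Nat.card_eq_fintype_card, hq]

lemma card_ker {q : ℕ} (hq : Fintype.card F = q) {m : ℕ} (f : Fin m → F) (hf : f ≠ 0) :
    Nat.card {x : Fin m → F // ∑ j, f j * x j = 0} = q ^ (m - 1) := by
  classical
  obtain ⟨j0, hj0⟩ : ∃ j, f j ≠ 0 := by
    by_contra h; push_neg at h; exact hf (funext h)
  have hphi : dotL f ≠ 0 := by
    intro h
    have : dotL f (Pi.single j0 1) = 0 := by rw [h]; rfl
    simp [dotL, Pi.single_apply, Finset.sum_ite_eq', hj0] at this
  have hrange : LinearMap.range (dotL f) = ⊤ := by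
    rcases eq_bot_or_eq_top (LinearMap.range (dotL f)) with h | h
    · exact absurd (LinearMap.range_eq_bot.mp h) hphi
    · exact h
  have hrank : Module.finrank F (LinearMap.ker (dotL f)) = m - 1 := by
    have h1 := LinearMap.finrank_range_add_finrank_ker (dotL f)
    rw [hrange] at h1
    simp [Module.finrank_self, Module.finrank_fintype_fun_eq_card] at h1
    omega
  have hcard : Fintype.card (LinearMap.ker (dotL f)) = q ^ (m - 1) := by
    rw [Module.card_eq_pow_finrank (K := F), hq, hrank]
    
  have he : {x : Fin m → F // ∑ j, f j * x j = 0} ≃ LinearMap.ker (dotL f) :=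
    Equiv.subtypeEquivRight (by intro x; simp [LinearMap.mem_ker, dotL])
  rw [Nat.card_congr he, Nat.card_eq_fintype_card, hcard]

lemma card_dot_ne {q : ℕ} (hq : Fintype.card F = q) {m : ℕ} (f : Fin m → F) (hf : f ≠ 0) :
    Nat.card {x : Fin m → F // ∑ j, f j * x j ≠ 0} = q ^ m - q ^ (m - 1) := by
  classical
  have h1 : Nat.card {x : Fin m → F // ∑ j, f j * x j ≠ 0} =
      Fintype.card (Fin m → F) - Fintype.card {x : Fin m → F // ∑ j, f j * x j = 0} := by
    rw [Nat.card_eq_fintype_card]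
    exact Fintype.card_subtype_compl _
  rw [h1, ← Nat.card_eq_fintype_card (α := {x : Fin m → F // ∑ j, f j * x j = 0}),
    card_ker hq f hf]
  simp [hq]
open Finset

variable {F : Type} [Field F]

/-- Extension/restriction equivalence for vectors supported on the first `w` coordinates. -/
def extEquiv {k : ℕ} (w : ℕ) (hw : w ≤ k) :
    {x : Fin k → F // ∀ j : Fin k, w ≤ (j : ℕ) → x j = 0} ≃ (Fin w → F) where
  toFun x j := x.1 (Fin.castLE hw j)
  invFun y := ⟨fun j => if h : (j : ℕ) < w then y ⟨j, h⟩ else 0, by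
    intro j hj; simp [Nat.not_lt.mpr hj]⟩
  left_inv := by
    rintro ⟨x, hx⟩
    ext j
    by_cases h : (j : ℕ) < w
    · simp [h]
    · simp [h, hx j (Nat.not_lt.mp h)]
  right_inv := by
    intro y; ext j; simp [j.isLt]

lemma extEquiv_zero_iff {k : ℕ} (w : ℕ) (hw : w ≤ k)
    (x : {x : Fin k → F // ∀ j : Fin k, w ≤ (j : ℕ) → x j = 0}) :
    extEquiv w hw x = 0 ↔ x.1 = 0 := by
  constructor
  · intro h
    ext j
    by_cases hj : (j : ℕ) < w
    · have := congrFun h ⟨j, hj⟩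
      simpa [extEquiv] using this
    · exact x.2 j (Nat.not_lt.mp hj)
  · intro h; ext j; simp [extEquiv, h]

lemma dot_extEquiv {k : ℕ} (w : ℕ) (hw : w ≤ k) (f : Fin k → F)
    (x : {x : Fin k → F // ∀ j : Fin k, w ≤ (j : ℕ) → x j = 0}) :
    ∑ j, f j * x.1 j = ∑ j : Fin w, f (Fin.castLE hw j) * (extEquiv w hw x) j := by
  classical
  have hsub : (univ.map (Fin.castLEEmb hw)) ⊆ (univ : Finset (Fin k)) :=
    subset_univ _
  rw [← Finset.sum_subset hsub]
  · rw [Finset.sum_map]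
    rfl
  · intro j _ hj
    have : ¬ (j : ℕ) < w := by
      intro h
      exact hj (by simp [Finset.mem_map]; exact ⟨⟨j, h⟩, by ext; simp⟩)
    rw [x.2 j (Nat.not_lt.mp this), mul_zero]
open Finset

lemma card_fin_ge (t c : ℕ) (hc : c ≤ t) : Nat.card {j : Fin t // c ≤ (j : ℕ)} = t - c := by
  have e : {j : Fin t // c ≤ (j : ℕ)} ≃ Fin (t - c) :=
    { toFun := fun j => ⟨(j : ℕ) - c, by omega⟩
      invFun := fun i => ⟨⟨(i : ℕ) + c, by omega⟩, by simp⟩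
      left_inv := by rintro ⟨⟨j, hj⟩, h⟩; simp at h ⊢; omega
      right_inv := by rintro ⟨i, hi⟩; simp }
  rw [Nat.card_congr e]; simp

lemma count_prod {β : Type} [Fintype β] (t : ℕ) (m : β → ℕ) (Qp : β → Prop) [DecidablePred Qp]
    (hm : ∀ b, m b ≤ t) :
    Nat.card {b : Fin t × β // Qp b.2 ∧ m b.2 ≤ (b.1 : ℕ)} =
      ∑ p : β, (if Qp p then t - m p else 0) := by
  classical
  have e : {b : Fin t × β // Qp b.2 ∧ m b.2 ≤ (b.1 : ℕ)} ≃
      (p : β) × {j : Fin t // Qp p ∧ m p ≤ (j : ℕ)} :=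
    { toFun := fun b => ⟨b.1.2, b.1.1, b.2⟩
      invFun := fun x => ⟨(x.2.1, x.1), x.2.2⟩
      left_inv := by rintro ⟨⟨j, p⟩, h⟩; rfl
      right_inv := by rintro ⟨p, j, h⟩; rfl }
  rw [Nat.card_congr e, Nat.card_eq_fintype_card, Fintype.card_sigma]
  congr 1
  ext p
  rw [← Nat.card_eq_fintype_card]
  by_cases hp : Qp p
  · simp only [hp, if_true]
    rw [← card_fin_ge t (m p) (hm p)]
    exact Nat.card_congr (Equiv.subtypeEquivRight (by tauto))
  · simp only [hp, if_false]
    rw [Nat.card_eq_zero]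
    left
    rw [isEmpty_subtype]
    tauto

lemma sum_ite_sub {β : Type} [Fintype β] (t : ℕ) (m : β → ℕ) (Qp : β → Prop) [DecidablePred Qp]
    (hm : ∀ b, m b ≤ t) :
    ∑ p : β, (if Qp p then t - m p else 0) =
      t * Nat.card {p : β // Qp p} - ∑ p : β, (if Qp p then m p else 0) := by
  classical
  rw [Nat.card_eq_fintype_card, Fintype.card_subtype]
  rw [← Finset.sum_filter, ← Finset.sum_filter]
  rw [Finset.sum_tsub_distrib _ (fun i _ => hm i), Finset.sum_const, smul_eq_mul, mul_comm]

/-- swap: sum over p of (filtered count over i) equals sum over i of subtype counts -/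
lemma sum_filter_swap {β : Type} [Fintype β] (s : Finset ℕ) (R : ℕ → β → Prop)
    (Qp : β → Prop) [DecidablePred Qp] [∀ i, DecidablePred (R i)] :
    ∑ p : β, (if Qp p then (s.filter (fun i => R i p)).card else 0) =
      ∑ i ∈ s, Nat.card {p : β // Qp p ∧ R i p} := by
  classical
  have h1 : ∀ p : β, (if Qp p then (s.filter (fun i => R i p)).card else 0) =
      ∑ i ∈ s, (if Qp p ∧ R i p then 1 else 0) := by
    intro p
    by_cases hp : Qp p
    · simp only [hp, if_true, true_and]
      rw [Finset.card_filter]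
    · simp [hp]
  rw [Finset.sum_congr rfl (fun p _ => h1 p), Finset.sum_comm]
  congr 1
  ext i
  rw [Nat.card_eq_fintype_card, Fintype.card_subtype, Finset.card_filter]
open Finset

/-- A downward-closed subset of `Icc 1 s` is an initial segment. -/
lemma dc_eq_Icc (s : ℕ) (S : Finset ℕ) (hS : S ⊆ Finset.Icc 1 s)
    (hdc : ∀ i ∈ S, ∀ j, 1 ≤ j → j ≤ i → j ∈ S) : S = Finset.Icc 1 S.card := by
  ext i
  simp only [Finset.mem_Icc]
  constructor
  · intro hi
    have h1 : Finset.Icc 1 i ⊆ S := by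
      intro j hj
      simp only [Finset.mem_Icc] at hj
      exact hdc i hi j hj.1 hj.2
    have := Finset.card_le_card h1
    simp only [Nat.card_Icc] at this
    have hi' := hS hi
    simp only [Finset.mem_Icc] at hi'
    omega
  · rintro ⟨h1, h2⟩
    by_contra hi
    have hsub : S ⊆ Finset.Icc 1 (i - 1) := by
      intro j hj
      simp only [Finset.mem_Icc]
      have hj' := hS hj
      simp only [Finset.mem_Icc] at hj'
      refine ⟨hj'.1, ?_⟩
      by_contra hji
      exact hi (hdc j hj i h1 (by omega))
    have := Finset.card_le_card hsub
    simp only [Nat.card_Icc] at this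
    omega

lemma nat_geom_sum_lt (q m : ℕ) (hq : 2 ≤ q) : ∑ j ∈ Finset.range m, q ^ j < q ^ m := by
  induction m with
  | zero => simp
  | succ m ih =>
    rw [Finset.sum_range_succ, pow_succ]
    have : q ^ m * 2 ≤ q ^ m * q := Nat.mul_le_mul_left _ hq
    omega

/-- restriction to coordinates `≥ w` -/
def extEquiv2 {F : Type} [Field F] {k : ℕ} (w : ℕ) (hw : w ≤ k) :
    {x : Fin k → F // ∀ j : Fin k, (j : ℕ) < w → x j = 0} ≃ (Fin (k - w) → F) where
  toFun x j := x.1 ⟨w + (j : ℕ), by omega⟩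
  invFun y := ⟨fun j => if h : w ≤ (j : ℕ) then y ⟨(j : ℕ) - w, by omega⟩ else 0, by
    intro j hj; simp [Nat.not_le.mpr hj]⟩
  left_inv := by
    rintro ⟨x, hx⟩
    ext j
    by_cases h : w ≤ (j : ℕ)
    · simp only [dif_pos h]
      congr 1
      ext
      simp
      omega
    · simp [dif_neg h, hx j (Nat.not_le.mp h)]
  right_inv := by
    intro y
    ext j
    simp

section counts

variable {F : Type} [Field F] [Fintype F] {q : ℕ}

/-- support below `w` -/
def QD {F : Type} [Field F] {k : ℕ} (w : ℕ) (x : Fin k → F) : Prop :=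
  ∀ j : Fin k, w ≤ (j : ℕ) → x j = 0

def dotp {F : Type} [Field F] {k : ℕ} (f x : Fin k → F) : F := ∑ j, f j * x j

lemma QD_smul {k : ℕ} (w : ℕ) (c : Fˣ) (x : Fin k → F) (h : QD w x) :
    QD w ((c : F) • x) := by
  intro j hj
  simp [Pi.smul_apply, h j hj]

lemma dotp_smul_ne {k : ℕ} (f : Fin k → F) (c : Fˣ) (x : Fin k → F)
    (h : dotp f x ≠ 0) : dotp f ((c : F) • x) ≠ 0 := by
  simp only [dotp, Pi.smul_apply, smul_eq_mul] at *
  rw [show ∑ j, f j * ((c : F) * x j) = (c : F) * ∑ j, f j * x j by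
    rw [Finset.mul_sum]; congr 1; ext j; ring]
  exact mul_ne_zero c.ne_zero h

lemma card_nonzero (hq : Fintype.card F = q) (m : ℕ) :
    Nat.card {x : Fin m → F // x ≠ 0} = q ^ m - 1 := by
  classical
  rw [Nat.card_eq_fintype_card, Fintype.card_subtype_compl]
  have h1 : Fintype.card {x : Fin m → F // x = 0} = 1 := by
    rw [Fintype.card_eq_one_iff]
    exact ⟨⟨0, rfl⟩, by rintro ⟨x, hx⟩; simp [hx]⟩
  rw [h1]
  simp [hq]

lemma proj_count (hq : Fintype.card F = q) {k : ℕ} (Q : (Fin k → F) → Prop)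
    (hQ : ∀ (c : Fˣ) (x : Fin k → F), Q x → Q ((c : F) • x)) :
    (q - 1) * Nat.card {p : Projectivization F (Fin k → F) // Q p.rep} =
      Nat.card {x : Fin k → F // x ≠ 0 ∧ Q x} := by
  classical
  rw [← Nat.card_congr (projCountEquiv F (Fin k → F) Q hQ), Nat.card_prod,
    Nat.card_eq_fintype_card (α := Fˣ), Fintype.card_units, hq]

lemma count_P (hq : Fintype.card F = q) (k : ℕ) :
    (q - 1) * Nat.card (Projectivization F (Fin k → F)) = q ^ k - 1 := by
  have h := proj_count hq (k := k) (fun _ => True) (fun _ _ _ => trivial)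
  rw [Nat.card_congr (Equiv.subtypeUnivEquiv (fun _ => trivial))] at h
  rw [h, ← card_nonzero hq k]
  exact Nat.card_congr (Equiv.subtypeEquivRight (by simp))

lemma count_P_dot (hq : Fintype.card F = q) {k : ℕ} (f : Fin k → F) (hf : f ≠ 0)
    (hk : 1 ≤ k) :
    Nat.card {p : Projectivization F (Fin k → F) // dotp f p.rep ≠ 0} = q ^ (k - 1) := by
  have hq2 : 2 ≤ q := hq ▸ Fintype.one_lt_card
  have h := proj_count hq (fun x => dotp f x ≠ 0) (dotp_smul_ne f)
  have h2 : Nat.card {x : Fin k → F // x ≠ 0 ∧ dotp f x ≠ 0} = q ^ k - q ^ (k - 1) := by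
    rw [← card_dot_ne hq f hf]
    refine Nat.card_congr (Equiv.subtypeEquivRight ?_)
    intro x
    simp only [dotp]
    constructor
    · tauto
    · intro hx
      refine ⟨?_, hx⟩
      rintro rfl
      simp at hx
  rw [h2] at h
  have key : q ^ k - q ^ (k - 1) = (q - 1) * q ^ (k - 1) := by
    have : q ^ k = q * q ^ (k - 1) := by
      rw [← pow_succ']
      congr 1
      omega
    rw [this, Nat.sub_mul, one_mul]
  rw [key] at h
  exact Nat.eq_of_mul_eq_mul_left (by omega) h

lemma count_P_QD (hq : Fintype.card F = q) {k : ℕ} (w : ℕ) (hw : w ≤ k) :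
    (q - 1) * Nat.card {p : Projectivization F (Fin k → F) // QD w p.rep} = q ^ w - 1 := by
  have h := proj_count hq (QD (k := k) w) (QD_smul w)
  rw [h, ← card_nonzero hq w]
  have e1 : {x : Fin k → F // x ≠ 0 ∧ QD w x} ≃
      {z : {x : Fin k → F // QD w x} // z.1 ≠ 0} :=
    { toFun := fun x => ⟨⟨x.1, x.2.2⟩, x.2.1⟩
      invFun := fun z => ⟨z.1.1, z.2, z.1.2⟩
      left_inv := by rintro ⟨x, h1, h2⟩; rfl
      right_inv := by rintro ⟨⟨x, h1⟩, h2⟩; rfl }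
  have e2 : {z : {x : Fin k → F // QD w x} // z.1 ≠ 0} ≃ {y : Fin w → F // y ≠ 0} := by
    refine (Equiv.subtypeEquiv (extEquiv w hw) ?_)
    intro z
    rw [not_iff_not]
    exact (extEquiv_zero_iff w hw z).symm.trans (by tauto)
  exact Nat.card_congr (e1.trans e2)

lemma count_P_QD_dot (hq : Fintype.card F = q) {k : ℕ} (w : ℕ) (hw : w ≤ k)
    (f : Fin k → F) (hg : ¬ ∀ j : Fin k, (j : ℕ) < w → f j = 0) :
    Nat.card {p : Projectivization F (Fin k → F) // QD w p.rep ∧ dotp f p.rep ≠ 0} =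
      q ^ (w - 1) := by
  have hq2 : 2 ≤ q := hq ▸ Fintype.one_lt_card
  rcases Nat.eq_zero_or_pos w with rfl | hwpos
  · exact absurd (fun j hj => absurd hj (by omega)) hg
  have h := proj_count hq (fun x => QD w x ∧ dotp f x ≠ 0)
    (fun c x hx => ⟨QD_smul w c x hx.1, dotp_smul_ne f c x hx.2⟩)
  -- the restricted functional
  set g : Fin w → F := fun j => f (Fin.castLE hw j) with hgdef
  have hg0 : g ≠ 0 := by
    intro h0
    apply hg
    intro j hj
    have := congrFun h0 ⟨(j : ℕ), hj⟩
    simpa [hgdef] using this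
  have e1 : {x : Fin k → F // x ≠ 0 ∧ QD w x ∧ dotp f x ≠ 0} ≃
      {z : {x : Fin k → F // QD w x} // ∑ j : Fin w, g j * (extEquiv w hw z) j ≠ 0} :=
    { toFun := fun x => ⟨⟨x.1, x.2.2.1⟩, by
        have hde := dot_extEquiv w hw f ⟨x.1, x.2.2.1⟩
        exact fun h0 => x.2.2.2 (hde.trans h0)⟩
      invFun := fun z => ⟨z.1.1, by
        have hd : dotp f z.1.1 ≠ 0 := by
          rw [show dotp f z.1.1 = ∑ j : Fin w, g j * (extEquiv w hw z.1) j from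
            dot_extEquiv w hw f z.1]
          exact z.2
        refine ⟨?_, z.1.2, hd⟩
        intro h0
        apply hd
        rw [h0]
        simp [dotp]⟩
      left_inv := by rintro ⟨x, h1⟩; rfl
      right_inv := by rintro ⟨⟨x, h1⟩, h2⟩; rfl }
  have e2 : {z : {x : Fin k → F // QD w x} // ∑ j : Fin w, g j * (extEquiv w hw z) j ≠ 0} ≃
      {y : Fin w → F // ∑ j, g j * y j ≠ 0} := by
    refine Equiv.subtypeEquiv (extEquiv w hw) ?_
    intro z
    rfl
  rw [Nat.card_congr (e1.trans e2), card_dot_ne hq g hg0] at h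
  have key : q ^ w - q ^ (w - 1) = (q - 1) * q ^ (w - 1) := by
    have : q ^ w = q * q ^ (w - 1) := by
      rw [← pow_succ']
      congr 1
      omega
    rw [this, Nat.sub_mul, one_mul]
  rw [key] at h
  exact Nat.eq_of_mul_eq_mul_left (by omega) h

lemma count_P_QD_dot_zero {k : ℕ} (w : ℕ)
    (f : Fin k → F) (hg : ∀ j : Fin k, (j : ℕ) < w → f j = 0) :
    Nat.card {p : Projectivization F (Fin k → F) // QD w p.rep ∧ dotp f p.rep ≠ 0} = 0 := by
  rw [Nat.card_eq_zero]
  left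
  rw [isEmpty_subtype]
  rintro p ⟨h1, h2⟩
  apply h2
  rw [dotp]
  apply Finset.sum_eq_zero
  intro j _
  by_cases hj : (j : ℕ) < w
  · rw [hg j hj, zero_mul]
  · rw [h1 j (Nat.not_lt.mp hj), mul_zero]

end counts


def dotL2 {F : Type} [Field F] {k : ℕ} (x : Fin k → F) : (Fin k → F) →ₗ[F] F where
  toFun f := ∑ j, f j * x j
  map_add' f g := by simp [add_mul, Finset.sum_add_distrib]
  map_smul' c f := by simp [Finset.mul_sum, mul_assoc]

lemma Icc_sdiff_Icc (s l : ℕ) : Finset.Icc 1 s \ Finset.Icc 1 l = Finset.Icc (l + 1) s := by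
  ext a; simp only [Finset.mem_sdiff, Finset.mem_Icc]; omega

lemma sum_Icc_split {M : Type} [AddCommMonoid M] (g : ℕ → M) (l s : ℕ) (h : l ≤ s) :
    ∑ i ∈ Finset.Icc 1 s, g i = ∑ i ∈ Finset.Icc 1 l, g i + ∑ i ∈ Finset.Icc (l+1) s, g i := by
  rw [← Finset.sum_union (by
    rw [Finset.disjoint_left]
    intro a ha ha'
    simp only [Finset.mem_Icc] at ha ha'
    omega)]
  congr 1
  ext a
  simp only [Finset.mem_union, Finset.mem_Icc]
  omega

lemma card_subtype_and_not {α : Type} [Fintype α] (A B : α → Prop)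
    [DecidablePred A] [DecidablePred B] (h : ∀ x, B x → A x) :
    Nat.card {x // A x ∧ ¬ B x} = Nat.card {x // A x} - Nat.card {x // B x} := by
  classical
  rw [Nat.card_eq_fintype_card, Nat.card_eq_fintype_card, Nat.card_eq_fintype_card,
    Fintype.card_subtype, Fintype.card_subtype, Fintype.card_subtype]
  rw [← Finset.card_sdiff_of_subset (by
    intro x hx
    simp only [Finset.mem_filter, Finset.mem_univ, true_and] at *
    exact h x hx)]
  congr 1
  ext x
  simp only [Finset.mem_sdiff, Finset.mem_filter, Finset.mem_univ, true_and]



open Finset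

lemma hwt_zero {F : Type} [Zero F] {n : ℕ} : hwt (0 : Fin n → F) = 0 := by
  have h : ∀ i : Fin n, ¬ ((0 : Fin n → F) i ≠ 0) := by simp
  unfold hwt
  rw [Nat.card_eq_zero]
  left
  rw [isEmpty_subtype]
  exact h

/-- Theorem `xxd2` (a): existence of a Griesmer code with the stated
weight distribution. -/
theorem stmt_1 (q : ℕ) (F : Type) [Field F] [Fintype F] (hq : Fintype.card F = q)
    (k s t : ℕ) (hs : 1 ≤ s) (hst : s ≤ t) (u : ℕ → ℕ)
    (hu0 : u 0 = 0) (huk : u (s + 1) = k)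
    (humono : ∀ i ∈ Finset.Icc 1 (s + 1), u (i - 1) < u i) :
    ∃ C : Submodule F
        (Fin (t * ((q ^ k - 1) / (q - 1)) - ∑ i ∈ Finset.Icc 1 s, (q ^ u i - 1) / (q - 1)) → F),
      Module.finrank F ↥C = k ∧
      minDist C = t * q ^ (k - 1) - ∑ i ∈ Finset.Icc 1 s, q ^ (u i - 1) ∧
      wdist C 0 = 1 ∧
      (∀ l ≤ s,
        wdist C ((t * q ^ (k - 1) - ∑ i ∈ Finset.Icc 1 s, q ^ (u i - 1)) +
            ∑ i ∈ Finset.Icc 1 l, q ^ (u i - 1)) =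
          q ^ (k - u l) - q ^ (k - u (l + 1))) ∧
      (∀ j, 1 ≤ j →
        (∀ l ≤ s, j ≠ (t * q ^ (k - 1) - ∑ i ∈ Finset.Icc 1 s, q ^ (u i - 1)) +
            ∑ i ∈ Finset.Icc 1 l, q ^ (u i - 1)) →
        wdist C j = 0) := by
  classical
  have hq2 : 2 ≤ q := hq ▸ Fintype.one_lt_card
  have hstep : ∀ i, 1 ≤ i → i ≤ s + 1 → u (i - 1) < u i := fun i h1 h2 =>
    humono i (Finset.mem_Icc.mpr ⟨h1, h2⟩)
  have hmono : ∀ a b, a < b → b ≤ s + 1 → u a < u b := by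
    intro a b hab hb
    induction b with
    | zero => omega
    | succ m ih =>
      have h1 : u m < u (m + 1) := by simpa using hstep (m + 1) (by omega) hb
      rcases Nat.lt_or_ge a m with h | h
      · exact lt_trans (ih h (by omega)) h1
      · have ham : a = m := by omega
        subst ham; exact h1
  have hmono' : ∀ a b, a ≤ b → b ≤ s + 1 → u a ≤ u b := by
    intro a b hab hb
    rcases Nat.lt_or_ge a b with h | h
    · exact le_of_lt (hmono a b h hb)
    · have hab' : a = b := by omega
      subst hab'; exact le_rfl
  have hu1 : 1 ≤ u 1 := by have := hmono 0 1 (by omega) (by omega); omega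
  have huleK : ∀ i, i ≤ s + 1 → u i ≤ k := fun i hi => huk ▸ hmono' i (s + 1) hi le_rfl
  have hukstrict : ∀ i, i ≤ s → u i < k := fun i hi => huk ▸ hmono i (s + 1) (by omega) le_rfl
  have hk2 : 2 ≤ k := lt_of_le_of_lt hu1 (hukstrict 1 hs)
  set d := t * q ^ (k - 1) - ∑ i ∈ Finset.Icc 1 s, q ^ (u i - 1) with hd
  set n := t * ((q ^ k - 1) / (q - 1)) - ∑ i ∈ Finset.Icc 1 s, (q ^ u i - 1) / (q - 1) with hn
  haveI : Finite (Projectivization F (Fin k → F)) := Quotient.finite _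
  haveI : Fintype (Projectivization F (Fin k → F)) := Fintype.ofFinite _
  set mc : Projectivization F (Fin k → F) → ℕ :=
    fun p => ((Finset.Icc 1 s).filter (fun i => QD (u i) p.rep)).card with hmc
  have hmcle : ∀ p, mc p ≤ t := by
    intro p
    have h1 := Finset.card_filter_le (Finset.Icc 1 s) (fun i => QD (u i) p.rep)
    rw [Nat.card_Icc] at h1
    simp only [hmc]
    omega
  have hcount : ∀ Qp : Projectivization F (Fin k → F) → Prop,
      Nat.card {b : {b : Fin t × Projectivization F (Fin k → F) // mc b.2 ≤ (b.1 : ℕ)} //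
          Qp b.1.2} =
        t * Nat.card {p : Projectivization F (Fin k → F) // Qp p} -
          ∑ i ∈ Finset.Icc 1 s,
            Nat.card {p : Projectivization F (Fin k → F) // Qp p ∧ QD (u i) p.rep} := by
    intro Qp
    have e1 : {b : {b : Fin t × Projectivization F (Fin k → F) // mc b.2 ≤ (b.1 : ℕ)} //
        Qp b.1.2} ≃
        {b : Fin t × Projectivization F (Fin k → F) // Qp b.2 ∧ mc b.2 ≤ (b.1 : ℕ)} :=
      (Equiv.subtypeSubtypeEquivSubtypeInter
        (fun b : Fin t × Projectivization F (Fin k → F) => mc b.2 ≤ (b.1 : ℕ))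
        (fun b => Qp b.2)).trans (Equiv.subtypeEquivRight (fun b => by tauto))
    rw [Nat.card_congr e1, count_prod t mc Qp hmcle, sum_ite_sub t mc Qp hmcle]
    congr 1
    exact sum_filter_swap (Finset.Icc 1 s) (fun i p => QD (u i) p.rep) Qp
  have hPcard : Nat.card (Projectivization F (Fin k → F)) = (q ^ k - 1) / (q - 1) := by
    rw [← count_P hq k, Nat.mul_div_cancel_left _ (show 0 < q - 1 by omega)]
  have hQDcard : ∀ i ∈ Finset.Icc 1 s,
      Nat.card {p : Projectivization F (Fin k → F) // QD (u i) p.rep} =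
        (q ^ u i - 1) / (q - 1) := by
    intro i hi
    rw [Finset.mem_Icc] at hi
    rw [← count_P_QD hq (u i) (huleK i (by omega)),
      Nat.mul_div_cancel_left _ (show 0 < q - 1 by omega)]
  have hIcard :
      Nat.card {b : Fin t × Projectivization F (Fin k → F) // mc b.2 ≤ (b.1 : ℕ)} = n := by
    have h := hcount (fun _ => True)
    rw [Nat.card_congr (Equiv.subtypeUnivEquiv (fun _ => trivial))] at h
    rw [h, hn]
    congr 1
    · rw [Nat.card_congr (Equiv.subtypeUnivEquiv (fun _ => trivial)), hPcard]
    · apply Finset.sum_congr rfl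
      intro i hi
      rw [Nat.card_congr (Equiv.subtypeEquivRight (fun p => by tauto)), hQDcard i hi]
  haveI : Fintype {b : Fin t × Projectivization F (Fin k → F) // mc b.2 ≤ (b.1 : ℕ)} :=
    Fintype.ofFinite _
  have hc : Fintype.card {b : Fin t × Projectivization F (Fin k → F) // mc b.2 ≤ (b.1 : ℕ)}
      = n := by rw [← Nat.card_eq_fintype_card]; exact hIcard
  let e : Fin n ≃ {b : Fin t × Projectivization F (Fin k → F) // mc b.2 ≤ (b.1 : ℕ)} :=
    (Fintype.equivFinOfCardEq hc).symm
  let G : (Fin k → F) →ₗ[F] (Fin n → F) := LinearMap.pi (fun a => dotL2 ((e a).1.2.rep))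
  have hGapp : ∀ (f : Fin k → F) (a : Fin n), G f a = dotp f ((e a).1.2.rep) := fun f a => rfl
  have hwtG : ∀ f : Fin k → F, hwt (G f) =
      Nat.card {b : {b : Fin t × Projectivization F (Fin k → F) // mc b.2 ≤ (b.1 : ℕ)} //
        dotp f b.1.2.rep ≠ 0} := by
    intro f
    exact Nat.card_congr (Equiv.subtypeEquiv e (fun a => by rw [hGapp]))
  set E : ℕ → (Fin k → F) → Prop := fun i f => ∀ j : Fin k, (j : ℕ) < u i → f j = 0 with hE
  set lf : (Fin k → F) → ℕ :=
    fun f => ((Finset.Icc 1 s).filter (fun i => E i f)).card with hlf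
  have hEdc : ∀ (f : Fin k → F) a b, a ≤ b → b ≤ s + 1 → E b f → E a f := by
    intro f a b hab hb hEb j hj
    exact hEb j (lt_of_lt_of_le hj (hmono' a b hab hb))
  have hfilter : ∀ f : Fin k → F,
      (Finset.Icc 1 s).filter (fun i => E i f) = Finset.Icc 1 (lf f) := by
    intro f
    exact dc_eq_Icc s _ (Finset.filter_subset _ _) (by
      intro i hi j hj1 hji
      rw [Finset.mem_filter, Finset.mem_Icc] at hi ⊢
      exact ⟨⟨hj1, le_trans hji hi.1.2⟩, hEdc f j i hji (by omega) hi.2⟩)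
  have hlfle : ∀ f : Fin k → F, lf f ≤ s := by
    intro f
    have h := Finset.card_filter_le (Finset.Icc 1 s) (fun i => E i f)
    rw [Nat.card_Icc] at h
    simp only [hlf]
    omega
  have hbound : ∑ i ∈ Finset.Icc 1 s, q ^ (u i - 1) < q ^ (k - 1) := by
    have hinj : ∀ i ∈ Finset.Icc 1 s, ∀ i' ∈ Finset.Icc 1 s,
        u i - 1 = u i' - 1 → i = i' := by
      intro i hi i' hi' hii
      rw [Finset.mem_Icc] at hi hi'
      have h1 : 1 ≤ u i := le_trans hu1 (hmono' 1 i hi.1 (by omega))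
      have h2 : 1 ≤ u i' := le_trans hu1 (hmono' 1 i' hi'.1 (by omega))
      by_contra hne
      rcases lt_or_gt_of_ne hne with h | h
      · have := hmono i i' h (by omega); omega
      · have := hmono i' i h (by omega); omega
    have himg : ∑ i ∈ Finset.Icc 1 s, q ^ (u i - 1) =
        ∑ j ∈ (Finset.Icc 1 s).image (fun i => u i - 1), q ^ j :=
      (Finset.sum_image hinj).symm
    have hsub : (Finset.Icc 1 s).image (fun i => u i - 1) ⊆ Finset.range (k - 1) := by
      intro j hj
      rw [Finset.mem_image] at hj
      obtain ⟨i, hi, rfl⟩ := hj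
      rw [Finset.mem_Icc] at hi
      have h1 : u i < k := hukstrict i hi.2
      have h2 : 1 ≤ u i := le_trans hu1 (hmono' 1 i hi.1 (by omega))
      rw [Finset.mem_range]
      omega
    calc ∑ i ∈ Finset.Icc 1 s, q ^ (u i - 1)
        = ∑ j ∈ (Finset.Icc 1 s).image (fun i => u i - 1), q ^ j := himg
      _ ≤ ∑ j ∈ Finset.range (k - 1), q ^ j :=
          Finset.sum_le_sum_of_subset hsub
      _ < q ^ (k - 1) := nat_geom_sum_lt q (k - 1) hq2
  have htq : q ^ (k - 1) ≤ t * q ^ (k - 1) := Nat.le_mul_of_pos_left _ (by omega)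
  have hd1 : 1 ≤ d := by rw [hd]; omega
  have hwtf : ∀ f : Fin k → F, f ≠ 0 →
      hwt (G f) = d + ∑ i ∈ Finset.Icc 1 (lf f), q ^ (u i - 1) := by
    intro f hf
    rw [hwtG f, hcount (fun p => dotp f p.rep ≠ 0)]
    have hdot : Nat.card {p : Projectivization F (Fin k → F) // dotp f p.rep ≠ 0}
        = q ^ (k - 1) := count_P_dot hq f hf (by omega)
    have hterm : ∀ i ∈ Finset.Icc 1 s,
        Nat.card {p : Projectivization F (Fin k → F) // dotp f p.rep ≠ 0 ∧ QD (u i) p.rep} =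
          if E i f then 0 else q ^ (u i - 1) := by
      intro i hi
      rw [Finset.mem_Icc] at hi
      by_cases hEi : E i f
      · rw [if_pos hEi, ← count_P_QD_dot_zero (u i) f hEi]
        exact Nat.card_congr (Equiv.subtypeEquivRight (fun p => by tauto))
      · rw [if_neg hEi, ← count_P_QD_dot hq (u i) (huleK i (by omega)) f hEi]
        exact Nat.card_congr (Equiv.subtypeEquivRight (fun p => by tauto))
    rw [hdot, Finset.sum_congr rfl hterm]
    have h1 : ∑ i ∈ Finset.Icc 1 s, (if E i f then 0 else q ^ (u i - 1)) =
        ∑ i ∈ Finset.Icc (lf f + 1) s, q ^ (u i - 1) := by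
      have h2 : ∀ i, (if E i f then 0 else q ^ (u i - 1)) =
          (if ¬ E i f then q ^ (u i - 1) else 0) := by
        intro i; by_cases h : E i f <;> simp [h]
      rw [Finset.sum_congr rfl (fun i _ => h2 i), ← Finset.sum_filter, Finset.filter_not,
        hfilter f, Icc_sdiff_Icc]
    rw [h1]
    have hsplit := sum_Icc_split (fun i => q ^ (u i - 1)) (lf f) s (hlfle f)
    rw [hd]
    omega
  have hWlt : ∀ l1 l2, l1 < l2 → l2 ≤ s →
      (d + ∑ i ∈ Finset.Icc 1 l1, q ^ (u i - 1)) <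
        (d + ∑ i ∈ Finset.Icc 1 l2, q ^ (u i - 1)) := by
    intro l1 l2 h12 h2s
    have hsplit := sum_Icc_split (fun i => q ^ (u i - 1)) l1 l2 (le_of_lt h12)
    have hmem : l1 + 1 ∈ Finset.Icc (l1 + 1) l2 := by rw [Finset.mem_Icc]; omega
    have hone : 1 ≤ ∑ i ∈ Finset.Icc (l1 + 1) l2, q ^ (u i - 1) :=
      le_trans (Nat.one_le_pow _ _ (by omega))
        (Finset.single_le_sum (f := fun i => q ^ (u i - 1)) (fun i _ => Nat.zero_le _) hmem)
    omega
  have hGinj : Function.Injective G := by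
    have h0 : ∀ f, G f = 0 → f = 0 := by
      intro f hGf
      by_contra hf
      have hw := hwtf f hf
      have hz : hwt (G f) = 0 := by rw [hGf]; exact hwt_zero
      omega
    exact LinearMap.ker_eq_bot.mp (LinearMap.ker_eq_bot'.mpr h0)
  have hEcard : ∀ i, i ≤ s + 1 →
      Nat.card {f : Fin k → F // E i f} = q ^ (k - u i) := by
    intro i hi
    rw [Nat.card_congr (extEquiv2 (u i) (huleK i hi)), card_fun hq]
  have hlf_char : ∀ (f : Fin k → F) l, l ≤ s →
      ((f ≠ 0 ∧ lf f = l) ↔ (E l f ∧ ¬ E (l + 1) f)) := by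
    intro f l hl
    constructor
    · rintro ⟨hf, rfl⟩
      constructor
      · rcases Nat.eq_zero_or_pos (lf f) with h0 | hpos
        · rw [h0, hE]
          intro j hj
          rw [hu0] at hj
          omega
        · have hmem : lf f ∈ (Finset.Icc 1 s).filter (fun i => E i f) := by
            rw [hfilter f, Finset.mem_Icc]
            exact ⟨hpos, le_rfl⟩
          exact (Finset.mem_filter.mp hmem).2
      · intro hE1
        rcases Nat.lt_or_ge (lf f) s with hlt | hge
        · have hmem : lf f + 1 ∈ (Finset.Icc 1 s).filter (fun i => E i f) :=
            Finset.mem_filter.mpr ⟨by rw [Finset.mem_Icc]; omega, hE1⟩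
          rw [hfilter f, Finset.mem_Icc] at hmem
          omega
        · have hls : lf f = s := le_antisymm (hlfle f) hge
          apply hf
          ext j
          rw [hls] at hE1
          exact hE1 j (by rw [huk]; exact j.isLt)
    · rintro ⟨hEl, hEl1⟩
      have hf : f ≠ 0 := by
        rintro rfl
        exact hEl1 (fun j hj => rfl)
      refine ⟨hf, ?_⟩
      have hge : l ≤ lf f := by
        have hsub : Finset.Icc 1 l ⊆ (Finset.Icc 1 s).filter (fun i => E i f) := by
          intro i hi
          rw [Finset.mem_Icc] at hi
          exact Finset.mem_filter.mpr ⟨by rw [Finset.mem_Icc]; omega,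
            hEdc f i l hi.2 (by omega) hEl⟩
        have h := Finset.card_le_card hsub
        rw [Nat.card_Icc] at h
        simp only [hlf]
        omega
      have hle : lf f ≤ l := by
        by_contra hgt
        push_neg at hgt
        have hmem : l + 1 ∈ Finset.Icc 1 (lf f) := by rw [Finset.mem_Icc]; omega
        rw [← hfilter f] at hmem
        exact hEl1 (Finset.mem_filter.mp hmem).2
      omega
  have hwd : ∀ jj, wdist (LinearMap.range G) jj =
      Nat.card {f : Fin k → F // hwt (G f) = jj} := by
    intro jj
    refine (Nat.card_congr (Equiv.ofBijective
      (fun f : {f : Fin k → F // hwt (G f) = jj} =>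
        (⟨G f.1, ⟨f.1, rfl⟩, f.2⟩ :
          {c : Fin n → F // c ∈ LinearMap.range G ∧ hwt c = jj}))
      ⟨?_, ?_⟩)).symm
    · rintro ⟨f1, h1⟩ ⟨f2, h2⟩ hh
      simp only [Subtype.mk.injEq] at hh ⊢
      exact hGinj hh
    · rintro ⟨c, ⟨f, rfl⟩, hcw⟩
      exact ⟨⟨f, hcw⟩, rfl⟩
  refine ⟨LinearMap.range G, ?_, ?_, ?_, ?_, ?_⟩
  · rw [LinearMap.finrank_range_of_inj hGinj]
    simp [Module.finrank_fintype_fun_eq_card]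
  · -- minDist
    have hmem : d ∈ {w | ∃ c ∈ LinearMap.range G, c ≠ 0 ∧ hwt c = w} := by
      set f0 : Fin k → F := Pi.single (⟨0, by omega⟩ : Fin k) 1 with hf0def
      have hf0 : f0 ≠ 0 := by
        intro h
        have h1 := congrFun h (⟨0, by omega⟩ : Fin k)
        rw [hf0def] at h1
        simp at h1
      have hlf0 : lf f0 = 0 := by
        have hempty : (Finset.Icc 1 s).filter (fun i => E i f0) = ∅ := by
          rw [Finset.filter_eq_empty_iff]
          intro i hi
          rw [Finset.mem_Icc] at hi
          intro hEi
          have h0 : (0 : ℕ) < u i := lt_of_lt_of_le (by omega) (hmono' 1 i hi.1 (by omega))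
          have h1 := hEi (⟨0, by omega⟩ : Fin k) (by simpa using h0)
          rw [hf0def] at h1
          simp at h1
        simp only [hlf]
        rw [hempty]
        simp
      refine ⟨G f0, ⟨f0, rfl⟩, ?_, ?_⟩
      · intro h
        exact hf0 (hGinj (by rw [h, map_zero]))
      · rw [hwtf f0 hf0, hlf0]
        simp
    have hlb : ∀ w ∈ {w | ∃ c ∈ LinearMap.range G, c ≠ 0 ∧ hwt c = w}, d ≤ w := by
      rintro w ⟨c, ⟨f, rfl⟩, hc0, rfl⟩
      have hf : f ≠ 0 := fun h => hc0 (by rw [h, map_zero])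
      rw [hwtf f hf]
      exact Nat.le_add_right _ _
    exact le_antisymm (Nat.sInf_le hmem) (le_csInf ⟨d, hmem⟩ hlb)
  · -- wdist C 0 = 1
    rw [hwd 0]
    have hiff : ∀ f : Fin k → F, hwt (G f) = 0 ↔ f = 0 := by
      intro f
      constructor
      · intro h
        by_contra hf
        have := hwtf f hf
        omega
      · rintro rfl
        rw [map_zero]
        exact hwt_zero
    rw [Nat.card_congr (Equiv.subtypeEquivRight hiff)]
    haveI : Unique {f : Fin k → F // f = 0} :=
      ⟨⟨⟨0, rfl⟩⟩, by rintro ⟨f, hf⟩; exact Subtype.ext hf⟩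
    exact Nat.card_unique
  · -- wdist at each weight
    intro l hl
    rw [hwd]
    have hchar : ∀ f : Fin k → F,
        (hwt (G f) = d + ∑ i ∈ Finset.Icc 1 l, q ^ (u i - 1)) ↔ (E l f ∧ ¬ E (l + 1) f) := by
      intro f
      constructor
      · intro h
        have hf : f ≠ 0 := by
          rintro rfl
          rw [map_zero, hwt_zero] at h
          omega
        have hw := hwtf f hf
        have hleq : lf f = l := by
          by_contra hne
          rcases lt_or_gt_of_ne hne with hlt | hgt
          · have := hWlt (lf f) l hlt hl; omega
          · have := hWlt l (lf f) hgt (hlfle f); omega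
        exact (hlf_char f l hl).mp ⟨hf, hleq⟩
      · intro hEf
        obtain ⟨hf, hleq⟩ := (hlf_char f l hl).mpr hEf
        rw [hwtf f hf, hleq]
    rw [Nat.card_congr (Equiv.subtypeEquivRight hchar)]
    rw [card_subtype_and_not (E l) (E (l + 1))
      (fun f => hEdc f l (l + 1) (by omega) (by omega))]
    rw [hEcard l (by omega), hEcard (l + 1) (by omega)]
  · -- other weights
    intro jj hjj hne
    rw [hwd]
    rw [Nat.card_eq_zero]
    left
    rw [isEmpty_subtype]
    intro f h
    by_cases hf : f = 0
    · subst hf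
      rw [map_zero, hwt_zero] at h
      omega
    · have hw := hwtf f hf
      exact hne (lf f) (hlfle f) (by rw [← h, hw])
end

section
/- Let q be a prime power and let integers satisfy 0 = u_0 < u_1 < u_2 < ... < u_s < u_{s+1} = k and 1 ≤ s ≤ t. Set n = t(q^k - 1)/(q - 1) - Σ_{i=1}^{s} (q^{u_i} - 1)/(q - 1). Then there exists an [n,k]_q linear code C such that for every 1 ≤ r ≤ k, the r-th generalized Hamming weight satisfies d_r(C) = t(q^k - q^{k-r})/(q - 1) - Σ_{i=1}^{s} (q^{u_i} - 1)/(q - 1) + Σ_{i=j_r+1}^{s} (q^{u_i - r} - 1)/(q - 1), where j_r = max{0 ≤ i ≤ s : u_i ≤ r} (with u_0 = 0). -/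
open Finset

open Module
open scoped Classical


/-- geometric sum `1 + q + ... + q^(m-1)`. -/
def gsum (q m : ℕ) : ℕ := ∑ j ∈ Finset.range m, q ^ j

lemma gsum_succ (q m : ℕ) : gsum q (m + 1) = gsum q m + q ^ m := Finset.sum_range_succ _ _

lemma gsum_mono (q : ℕ) {a b : ℕ} (h : a ≤ b) : gsum q a ≤ gsum q b :=
  Finset.sum_le_sum_of_subset (Finset.range_subset_range.mpr h)

lemma mul_gsum {q : ℕ} (hq : 1 ≤ q) (m : ℕ) : (q - 1) * gsum q m = q ^ m - 1 := by
  have h1 : 1 ≤ q ^ m := Nat.one_le_pow _ _ hq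
  have hg : (∑ i ∈ Finset.range m, (q:ℤ)^i) * ((q:ℤ) - 1) = (q:ℤ)^m - 1 := geom_sum_mul _ m
  have hcast : (gsum q m : ℤ) = ∑ i ∈ Finset.range m, (q:ℤ)^i := by simp [gsum]
  zify [hq, h1]
  rw [hcast, mul_comm]
  exact hg

lemma gsum_le {q : ℕ} (hq : 2 ≤ q) (m : ℕ) : gsum q m ≤ q ^ m - 1 := by
  have h := mul_gsum (by omega : 1 ≤ q) m
  calc gsum q m ≤ (q - 1) * gsum q m := Nat.le_mul_of_pos_left _ (by omega)
    _ = q ^ m - 1 := h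

lemma gsum_div {q : ℕ} (hq : 2 ≤ q) (m : ℕ) : (q ^ m - 1) / (q - 1) = gsum q m := by
  rw [← mul_gsum (by omega : 1 ≤ q) m, Nat.mul_div_cancel_left _ (by omega : 0 < q - 1)]

lemma pow_sub_div {q : ℕ} (hq : 2 ≤ q) {a b : ℕ} (h : a ≤ b) :
    (q ^ b - q ^ a) / (q - 1) = gsum q b - gsum q a := by
  have ha := mul_gsum (by omega : 1 ≤ q) a
  have hb := mul_gsum (by omega : 1 ≤ q) b
  have hle : gsum q a ≤ gsum q b := gsum_mono q h
  have hpl : q ^ a ≤ q ^ b := Nat.pow_le_pow_right (by omega) h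
  have h1a : 1 ≤ q ^ a := Nat.one_le_pow _ _ (by omega)
  have key : (q - 1) * (gsum q b - gsum q a) = q ^ b - q ^ a := by
    rw [Nat.mul_sub]; omega
  rw [← key, Nat.mul_div_cancel_left _ (by omega : 0 < q - 1)]

section Monic

variable {F : Type} [Field F] [Fintype F] {k : ℕ}

/-- a projective representative: first nonzero coordinate equals 1. -/
def PMonic (v : Fin k → F) : Prop := ∃ i, v i = 1 ∧ ∀ j, j < i → v j = 0

lemma PMonic.ne_zero {v : Fin k → F} (h : PMonic v) : v ≠ 0 := by
  obtain ⟨i, h1, -⟩ := h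
  intro h0; rw [h0] at h1; simpa using h1.symm

/-- the number of monic vectors in a subspace `V` equals `gsum q (dim V)`. -/
lemma card_pmonic {q : ℕ} (hq : Fintype.card F = q) (V : Submodule F (Fin k → F)) :
    Nat.card {v : Fin k → F // PMonic v ∧ v ∈ V} = gsum q (finrank F V) := by
  have hq2 : 2 ≤ q := hq ▸ Fintype.one_lt_card
  -- the bijection (monic in V) × Fˣ ≃ nonzero elements of V
  let f : {v : Fin k → F // PMonic v ∧ v ∈ V} × Fˣ → {x : ↥V // x ≠ 0} := fun p =>
    ⟨⟨(p.2 : F) • p.1.1, V.smul_mem _ p.1.2.2⟩, by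
      simp only [ne_eq, Submodule.mk_eq_zero]
      exact smul_ne_zero (Units.ne_zero p.2) p.1.2.1.ne_zero⟩
  have hbij : Function.Bijective f := by
    constructor
    · rintro ⟨⟨w, hw, hwV⟩, c⟩ ⟨⟨w', hw', hw'V⟩, c'⟩ hfe
      obtain ⟨i, hi1, hi0⟩ := hw
      obtain ⟨i', hi'1, hi'0⟩ := hw'
      apply_fun (fun (x : {x : ↥V // x ≠ 0}) => (x.1 : Fin k → F)) at hfe
      simp only [f] at hfe
      have heq : (c : F) • w = (c' : F) • w' := hfe
      have hii : i = i' := by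
        rcases lt_trichotomy i i' with h | h | h
        · have := congrFun heq i
          simp only [Pi.smul_apply, smul_eq_mul] at this
          rw [hi'0 i h, hi1] at this
          exact absurd (by simpa using this) (Units.ne_zero c)
        · exact h
        · have := congrFun heq i'
          simp only [Pi.smul_apply, smul_eq_mul] at this
          rw [hi0 i' h, hi'1] at this
          exact absurd (by simpa using this.symm) (Units.ne_zero c')
      subst hii
      have hcc : (c : F) = (c' : F) := by
        have := congrFun heq i
        simp only [Pi.smul_apply, smul_eq_mul] at this
        rw [hi1, hi'1] at this
        simpa using this
      have hcu : c = c' := Units.ext hcc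
      have hww : w = w' := by
        have h2 : (c : F) • w = (c : F) • w' := by rw [heq, hcc]
        have h3 := congrArg (fun z => (c : F)⁻¹ • z) h2
        simpa [inv_smul_smul₀ (Units.ne_zero c)] using h3
      subst hcu; subst hww; rfl
    · rintro ⟨⟨v, hvV⟩, hv0⟩
      have hvne : v ≠ 0 := by simpa [Submodule.mk_eq_zero] using hv0
      have hS : (Finset.univ.filter (fun j => v j ≠ 0)).Nonempty := by
        rcases Function.ne_iff.mp hvne with ⟨j, hj⟩
        exact ⟨j, by simpa using hj⟩
      set i := (Finset.univ.filter (fun j => v j ≠ 0)).min' hS with hidef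
      have hvi : v i ≠ 0 := by
        have := Finset.min'_mem _ hS
        simpa using this
      have hbelow : ∀ j, j < i → v j = 0 := by
        intro j hj
        by_contra hvj
        exact absurd (Finset.min'_le _ j (by simpa using hvj)) (not_le.mpr hj)
      refine ⟨⟨⟨(v i)⁻¹ • v, ⟨i, by simp [inv_mul_cancel₀ hvi], fun j hj => by
        simp [hbelow j hj]⟩, V.smul_mem _ hvV⟩, Units.mk0 (v i) hvi⟩, ?_⟩
      apply Subtype.ext
      apply Subtype.ext
      simp [f, smul_inv_smul₀ hvi]
  have hcard := Nat.card_congr (Equiv.ofBijective f hbij)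
  rw [Nat.card_prod] at hcard
  -- card of nonzero elements of V
  have hV : Nat.card {x : ↥V // x ≠ 0} = q ^ finrank F V - 1 := by
    rw [Nat.card_eq_fintype_card]
    simp only [ne_eq]
    rw [Fintype.card_subtype_compl, Fintype.card_subtype_eq (0 : ↥V),
      card_eq_pow_finrank (K := F) (V := ↥V), hq]
  have hU : Nat.card Fˣ = q - 1 := by
    rw [Nat.card_eq_fintype_card, Fintype.card_units, hq]
  rw [hV, hU] at hcard
  have hgs := mul_gsum (by omega : 1 ≤ q) (finrank F V)
  have hfin : (q-1) * Nat.card {v : Fin k → F // PMonic v ∧ v ∈ V}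
      = (q-1) * gsum q (finrank F V) := by
    rw [hgs, mul_comm, hcard]
  exact Nat.eq_of_mul_eq_mul_left (by omega) hfin

end Monic
open Finset Module
open scoped Classical

section Band

variable (F : Type) [Field F] (k : ℕ)

/-- the subspace of vectors supported on coordinates in `[a, b)`. -/
def band (a b : ℕ) : Submodule F (Fin k → F) where
  carrier := {v | ∀ j : Fin k, v j ≠ 0 → a ≤ (j : ℕ) ∧ (j : ℕ) < b}
  add_mem' := by
    intro x y hx hy j hj
    by_cases hxj : x j = 0
    · exact hy j (by simpa [hxj] using hj)
    · exact hx j hxj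
  zero_mem' := by intro j hj; simp at hj
  smul_mem' := by
    intro c x hx j hj
    exact hx j (by intro h0; simp [h0] at hj)

variable {F k}

lemma mem_band {a b : ℕ} {v : Fin k → F} :
    v ∈ band F k a b ↔ ∀ j : Fin k, v j ≠ 0 → a ≤ (j : ℕ) ∧ (j : ℕ) < b := Iff.rfl

lemma band_inf_band {a m b : ℕ} (hm : m ≤ b) :
    band F k a b ⊓ band F k 0 m = band F k a m := by
  ext v
  simp only [Submodule.mem_inf, mem_band]
  constructor
  · rintro ⟨h1, h2⟩ j hj
    exact ⟨(h1 j hj).1, (h2 j hj).2⟩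
  · intro h
    exact ⟨fun j hj => ⟨(h j hj).1, lt_of_lt_of_le (h j hj).2 hm⟩,
      fun j hj => ⟨Nat.zero_le _, (h j hj).2⟩⟩

/-- `band` is linearly equivalent to functions on the corresponding index subtype. -/
noncomputable def bandEquiv (a b : ℕ) :
    ↥(band F k a b) ≃ₗ[F] ({j : Fin k // a ≤ (j : ℕ) ∧ (j : ℕ) < b} → F) where
  toFun v := fun j => v.1 j.1
  map_add' := by intros; rfl
  map_smul' := by intros; rfl
  invFun f := ⟨fun j => if h : a ≤ (j : ℕ) ∧ (j : ℕ) < b then f ⟨j, h⟩ else 0, by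
    intro j hj
    by_contra h
    simp [dif_neg h] at hj⟩
  left_inv := by
    rintro ⟨v, hv⟩
    apply Subtype.ext
    funext j
    by_cases h : a ≤ (j : ℕ) ∧ (j : ℕ) < b
    · simp [dif_pos h]
    · simp only [dif_neg h]
      by_contra hne
      exact h (hv j (fun h0 => hne h0.symm))
  right_inv := by
    intro f
    funext j
    simp [dif_pos j.2]

lemma finrank_band {a b : ℕ} (hb : b ≤ k) :
    finrank F ↥(band F k a b) = b - a := by
  rw [LinearEquiv.finrank_eq (bandEquiv a b), finrank_pi]
  rw [Fintype.card_subtype]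
  have : Finset.filter (fun j : Fin k => a ≤ (j : ℕ) ∧ (j : ℕ) < b) Finset.univ
      = (Finset.Ico a b).attachFin (fun m hm => lt_of_lt_of_le (Finset.mem_Ico.mp hm).2 hb) := by
    ext j
    simp [Finset.mem_attachFin, Finset.mem_Ico]
  rw [this, Finset.card_attachFin, Nat.card_Ico]

lemma band_bot {a b : ℕ} (h : b ≤ a) : band F k a b = ⊥ := by
  ext v
  simp only [mem_band, Submodule.mem_bot]
  constructor
  · intro hv
    funext j
    by_contra hj
    have := hv j hj
    omega
  · intro hv j hj
    rw [hv] at hj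
    simp at hj

end Band

section Perp

variable {F : Type} [Field F] {k : ℕ}

/-- the self-duality of `Fin k → F` given by the dot product. -/
noncomputable def dotEquiv : (Fin k → F) ≃ₗ[F] Module.Dual F (Fin k → F) where
  toFun v :=
    { toFun := fun w => ∑ j, w j * v j
      map_add' := by intros; simp [add_mul, Finset.sum_add_distrib]
      map_smul' := by intros; simp [Finset.mul_sum, mul_assoc] }
  map_add' := by
    intros x y; ext w; simp [mul_add, Finset.sum_add_distrib]
  map_smul' := by
    intros c x; ext w
    simp [Finset.mul_sum]
    congr 1; funext j; ring
  invFun φ := fun j => φ (Pi.single j 1)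
  left_inv := by
    intro v
    funext j
    simp [Pi.single_apply, Finset.sum_ite_eq' Finset.univ j]
  right_inv := by
    intro φ
    refine LinearMap.ext fun w => ?_
    simp only [LinearMap.coe_mk, AddHom.coe_mk]
    conv_rhs => rw [← Finset.univ_sum_single w]
    rw [map_sum]
    congr 1
    funext j
    have hsingle : (Pi.single j (w j) : Fin k → F) = w j • (Pi.single j (1 : F) : Fin k → F) := by
      funext x
      by_cases hx : x = j
      · subst hx; simp
      · simp [Pi.single_eq_of_ne hx]
    rw [hsingle, map_smul, smul_eq_mul]

/-- the orthogonal complement w.r.t. the dot product. -/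
noncomputable def perp (W : Submodule F (Fin k → F)) : Submodule F (Fin k → F) :=
  W.dualAnnihilator.comap (dotEquiv : (Fin k → F) ≃ₗ[F] Module.Dual F (Fin k → F)).toLinearMap

lemma mem_perp {W : Submodule F (Fin k → F)} {v : Fin k → F} :
    v ∈ perp W ↔ ∀ w ∈ W, ∑ j, w j * v j = 0 := by
  have h1 : v ∈ perp W ↔ (dotEquiv v : Module.Dual F (Fin k → F)) ∈ W.dualAnnihilator := by
    rw [perp, Submodule.mem_comap]
    simp only [LinearEquiv.coe_coe]
  rw [h1, Submodule.mem_dualAnnihilator]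
  exact Iff.rfl

lemma finrank_perp (W : Submodule F (Fin k → F)) :
    finrank F ↥(perp W) = k - finrank F ↥W := by
  have h1 : finrank F ↥(perp W) = finrank F ↥W.dualAnnihilator := by
    rw [perp, Submodule.comap_equiv_eq_map_symm]
    exact LinearEquiv.finrank_map_eq _ _
  have h2 := LinearEquiv.finrank_eq (R := F) (M := (Fin k → F) ⧸ W) (N := ↥W.dualAnnihilator)
    (Subspace.quotEquivAnnihilator (K := F) (V := Fin k → F) W)
  have h3 := Submodule.finrank_quotient_add_finrank W
  have h4 : finrank F (Fin k → F) = k := by rw [finrank_pi, Fintype.card_fin]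
  omega

lemma band_le_perp {r : ℕ} : band F k r k ≤ perp (band F k 0 r) := by
  intro v hv
  rw [mem_perp]
  intro w hw
  apply Finset.sum_eq_zero
  intro j _
  by_cases hwj : w j = 0
  · simp [hwj]
  · have h1 := (mem_band.mp hw) j hwj
    have h2 : v j = 0 := by
      by_contra hvj
      have := (mem_band.mp hv) j hvj
      omega
    simp [h2]

lemma perp_band (r : ℕ) (hr : r ≤ k) : perp (band F k 0 r) = band F k r k := by
  symm
  apply Submodule.eq_of_le_of_finrank_eq band_le_perp
  rw [finrank_perp, finrank_band hr, finrank_band (le_refl k)]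
  omega

end Perp
open Finset Module
open scoped Classical



section Helpers

lemma card_and_not {α : Type*} [Fintype α] (A B : α → Prop) :
    Nat.card {x // A x ∧ ¬ B x} = Nat.card {x // A x} - Nat.card {x // A x ∧ B x} := by
  classical
  have e : {x // A x ∧ B x} ⊕ {x // A x ∧ ¬ B x} ≃ {x // A x} :=
    { toFun := Sum.elim (fun y => ⟨y.1, y.2.1⟩) (fun y => ⟨y.1, y.2.1⟩)
      invFun := fun y => if h : B y.1 then .inl ⟨y.1, y.2, h⟩ else .inr ⟨y.1, y.2, h⟩
      left_inv := by
        rintro (⟨x, hA, hB⟩ | ⟨x, hA, hB⟩)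
        · simp [hB]
        · simp [hB]
      right_inv := by
        rintro ⟨x, hA⟩
        by_cases h : B x
        · simp [h]
        · simp [h] }
  have h := Nat.card_congr e
  rw [Nat.card_sum] at h
  omega

lemma sum_sub_const {t a : ℕ} {f : ℕ → ℕ} (h : ∀ τ ∈ Finset.range t, f τ ≤ a) :
    ∑ τ ∈ Finset.range t, (a - f τ) = t * a - ∑ τ ∈ Finset.range t, f τ := by
  have h1 : (∑ τ ∈ Finset.range t, (a - f τ)) + ∑ τ ∈ Finset.range t, f τ = t * a := by
    rw [← Finset.sum_add_distrib]
    rw [Finset.sum_congr rfl (fun τ hτ => Nat.sub_add_cancel (h τ hτ))]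
    simp [mul_comm]
  omega

lemma sum_ite_shift {s t : ℕ} (g : ℕ → ℕ) (hst : s ≤ t) :
    ∑ τ ∈ Finset.range t, (if τ + 1 ≤ s then g (τ + 1) else 0) = ∑ i ∈ Finset.Icc 1 s, g i := by
  rw [← Finset.sum_subset (Finset.range_subset_range.mpr hst)
    (fun τ _ hτ => by rw [if_neg]; simp only [Finset.mem_range, not_lt] at hτ; omega)]
  rw [Finset.sum_congr rfl (fun τ hτ => if_pos (by simp only [Finset.mem_range] at hτ; omega))]
  have : Finset.Icc 1 s = Finset.Ico 1 (s + 1) := by rw [Finset.Ico_add_one_right_eq_Icc]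
  rw [this, Finset.sum_Ico_eq_sum_range]
  simp only [Nat.add_sub_cancel]
  exact Finset.sum_congr rfl (fun τ _ => by rw [add_comm])

end Helpers

section Construction

variable (F : Type) [Field F] [Fintype F]

/-- the subspace excluded from the `τ`-th copy of the simplex code. -/
noncomputable def excl (k s : ℕ) (u : ℕ → ℕ) (τ : ℕ) : Submodule F (Fin k → F) :=
  if τ + 1 ≤ s then band F k 0 (u (τ + 1)) else ⊥

/-- index type for the columns of the generator matrix. -/
def ColIdx (k s t : ℕ) (u : ℕ → ℕ) : Type :=
  Σ τ : Fin t, {v : Fin k → F // PMonic v ∧ v ∉ excl F k s u τ.1}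

noncomputable instance (k s t : ℕ) (u : ℕ → ℕ) : Fintype (ColIdx F k s t u) := by
  unfold ColIdx; infer_instance

variable {F} {k s t : ℕ} {u : ℕ → ℕ}

/-- the column vector at an index. -/
def colv (x : ColIdx F k s t u) : Fin k → F := x.2.1

lemma card_colv_mem {q : ℕ} (hq : Fintype.card F = q) (V : Submodule F (Fin k → F)) :
    Nat.card {x : ColIdx F k s t u // colv x ∈ V} =
      ∑ τ ∈ Finset.range t,
        (gsum q (finrank F ↥V) - gsum q (finrank F ↥(V ⊓ excl F k s u τ))) := by
  classical
  have e1 : {x : ColIdx F k s t u // colv x ∈ V} ≃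
      Σ τ : Fin t, {v : Fin k → F // (PMonic v ∧ v ∉ excl F k s u τ.1) ∧ v ∈ V} :=
    { toFun := fun x => ⟨x.1.1, ⟨x.1.2.1, ⟨x.1.2.2, x.2⟩⟩⟩
      invFun := fun y => ⟨⟨y.1, ⟨y.2.1, y.2.2.1⟩⟩, y.2.2.2⟩
      left_inv := fun x => rfl
      right_inv := fun y => rfl }
  rw [Nat.card_congr e1, Nat.card_eq_fintype_card, Fintype.card_sigma]
  rw [← Fin.sum_univ_eq_sum_range]
  apply Finset.sum_congr rfl
  intro τ _
  have e2 : {v : Fin k → F // (PMonic v ∧ v ∉ excl F k s u τ.1) ∧ v ∈ V} ≃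
      {v : Fin k → F // (PMonic v ∧ v ∈ V) ∧ ¬ v ∈ excl F k s u τ.1} :=
    Equiv.subtypeEquivRight (fun v => by tauto)
  have e3 : {v : Fin k → F // (PMonic v ∧ v ∈ V) ∧ v ∈ excl F k s u τ.1} ≃
      {v : Fin k → F // PMonic v ∧ v ∈ V ⊓ excl F k s u τ.1} :=
    Equiv.subtypeEquivRight (fun v => by
      simp only [Submodule.mem_inf]; tauto)
  have h1 : Fintype.card {v : Fin k → F // (PMonic v ∧ v ∉ excl F k s u τ.1) ∧ v ∈ V}
      = Nat.card {v : Fin k → F // (PMonic v ∧ v ∈ V) ∧ ¬ v ∈ excl F k s u τ.1} := by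
    rw [← Nat.card_eq_fintype_card]; exact Nat.card_congr e2
  rw [h1, card_and_not, card_pmonic hq, Nat.card_congr e3, card_pmonic hq]

lemma card_colIdx {q : ℕ} (hq : Fintype.card F = q) :
    Nat.card (ColIdx F k s t u) =
      ∑ τ ∈ Finset.range t, (gsum q k - gsum q (finrank F ↥(excl F k s u τ))) := by
  have e0 : ColIdx F k s t u ≃ {x : ColIdx F k s t u // colv x ∈ (⊤ : Submodule F (Fin k → F))} :=
    (Equiv.subtypeUnivEquiv (fun x => Submodule.mem_top)).symm
  rw [Nat.card_congr e0, card_colv_mem hq]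
  apply Finset.sum_congr rfl
  intro τ _
  rw [top_inf_eq, finrank_top, finrank_pi, Fintype.card_fin]

/-- evaluation (generator-matrix) linear map. -/
noncomputable def evalMap {n : ℕ} (cols : Fin n → (Fin k → F)) :
    (Fin k → F) →ₗ[F] (Fin n → F) where
  toFun x := fun m => ∑ j, x j * cols m j
  map_add' x y := by funext m; simp [add_mul, Finset.sum_add_distrib]
  map_smul' c x := by funext m; simp [Finset.mul_sum, mul_assoc]

lemma suppWt_map {n : ℕ} (cols : Fin n → (Fin k → F)) (W : Submodule F (Fin k → F)) :
    suppWt (W.map (evalMap cols)) = n - Nat.card {m : Fin n // cols m ∈ perp W} := by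
  have hiff : ∀ m : Fin n, (∃ x ∈ W.map (evalMap cols), x m ≠ 0) ↔ ¬ cols m ∈ perp W := by
    intro m
    rw [mem_perp]
    push_neg
    constructor
    · rintro ⟨x, ⟨w, hwW, rfl⟩, hx⟩
      exact ⟨w, hwW, hx⟩
    · rintro ⟨w, hw, hne⟩
      exact ⟨evalMap cols w, ⟨w, hw, rfl⟩, hne⟩
  rw [suppWt, Nat.card_congr (Equiv.subtypeEquivRight hiff), Nat.card_eq_fintype_card,
    Nat.card_eq_fintype_card]
  rw [Fintype.card_subtype_compl, Fintype.card_fin]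

end Construction


/-- Theorem `xxd2` (c): the generalized Hamming weights of the
constructed code. -/
theorem stmt_3 (q : ℕ) (F : Type) [Field F] [Fintype F] (hq : Fintype.card F = q)
    (k s t : ℕ) (hs : 1 ≤ s) (hst : s ≤ t) (u : ℕ → ℕ)
    (hu0 : u 0 = 0) (huk : u (s + 1) = k)
    (humono : ∀ i ∈ Finset.Icc 1 (s + 1), u (i - 1) < u i) :
    ∃ C : Submodule F
        (Fin (t * ((q ^ k - 1) / (q - 1)) - ∑ i ∈ Finset.Icc 1 s, (q ^ u i - 1) / (q - 1)) → F),
      Module.finrank F ↥C = k ∧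
      ∀ r, 1 ≤ r → r ≤ k →
        ghw C r =
          t * ((q ^ k - q ^ (k - r)) / (q - 1)) -
              (∑ i ∈ Finset.Icc 1 s, (q ^ u i - 1) / (q - 1)) +
            ∑ i ∈ Finset.Icc (sSup {i : ℕ | i ≤ s ∧ u i ≤ r} + 1) s,
              (q ^ (u i - r) - 1) / (q - 1) := by
  classical
  have hq2 : 2 ≤ q := hq ▸ Fintype.one_lt_card
  have hstep : ∀ i, 1 ≤ i → i ≤ s + 1 → u (i - 1) < u i := fun i h1 h2 =>
    humono i (Finset.mem_Icc.mpr ⟨h1, h2⟩)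
  have hmono : ∀ a b, a ≤ b → b ≤ s + 1 → u a ≤ u b := by
    intro a b hab hb
    induction b, hab using Nat.le_induction with
    | base => exact le_refl _
    | succ b hab ih =>
      have h1 := hstep (b + 1) (by omega) (by omega)
      have h2 := ih (by omega)
      simp only [Nat.add_sub_cancel] at h1
      omega
  have husk : u s < k := by
    have h1 := hstep (s + 1) (by omega) (le_refl _)
    simp only [Nat.add_sub_cancel] at h1
    omega
  have huik : ∀ i, i ≤ s → u i < k := fun i hi =>
    lt_of_le_of_lt (hmono i s hi (by omega)) husk
  have hk2 : 2 ≤ k := by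
    have h1 := hstep 1 (by omega) (by omega)
    have h2 := hmono 1 s (by omega) (by omega)
    simp only [Nat.sub_self] at h1
    omega
  have ht1 : 1 ≤ t := le_trans hs hst
  have hdivk : (q ^ k - 1) / (q - 1) = gsum q k := gsum_div hq2 k
  have hdivu : ∀ m : ℕ, (q ^ m - 1) / (q - 1) = gsum q m := fun m => gsum_div hq2 m
  -- the length of the code
  set n := t * ((q ^ k - 1) / (q - 1)) - ∑ i ∈ Finset.Icc 1 s, (q ^ u i - 1) / (q - 1) with hn
  have hBsum : ∑ i ∈ Finset.Icc 1 s, (q ^ u i - 1) / (q - 1)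
      = ∑ i ∈ Finset.Icc 1 s, gsum q (u i) :=
    Finset.sum_congr rfl (fun i _ => hdivu (u i))
  have hfre : ∀ τ : ℕ, finrank F ↥(excl F k s u τ) = if τ + 1 ≤ s then u (τ + 1) else 0 := by
    intro τ
    by_cases h : τ + 1 ≤ s
    · rw [excl, if_pos h, if_pos h, finrank_band (le_of_lt (huik (τ + 1) h))]
      omega
    · rw [excl, if_neg h, if_neg h]
      exact finrank_bot F _
  -- the number of columns equals n
  have hcard : Fintype.card (ColIdx F k s t u) = n := by
    rw [← Nat.card_eq_fintype_card, card_colIdx hq]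
    have h1 : ∀ τ ∈ Finset.range t,
        gsum q k - gsum q (finrank F ↥(excl F k s u τ))
          = gsum q k - (if τ + 1 ≤ s then gsum q (u (τ + 1)) else 0) := by
      intro τ _
      rw [hfre τ]
      congr 1
      split
      · rfl
      · simp [gsum]
    rw [Finset.sum_congr rfl h1, sum_sub_const (by
      intro τ _
      split
      case isTrue h => exact gsum_mono q (le_of_lt (huik (τ + 1) h))
      case isFalse h => exact Nat.zero_le _), sum_ite_shift (fun i => gsum q (u i)) hst]
    rw [hn, hdivk, hBsum]
  -- the code
  set e : Fin n ≃ ColIdx F k s t u := (Fintype.equivFinOfCardEq hcard).symm with he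
  set cols : Fin n → (Fin k → F) := fun m => colv (e m) with hcols
  have hcols_count : ∀ V : Submodule F (Fin k → F),
      Nat.card {m : Fin n // cols m ∈ V} =
        ∑ τ ∈ Finset.range t,
          (gsum q (finrank F ↥V) - gsum q (finrank F ↥(V ⊓ excl F k s u τ))) := by
    intro V
    have ee : {m : Fin n // cols m ∈ V} ≃ {x : ColIdx F k s t u // colv x ∈ V} :=
      Equiv.subtypeEquiv e (fun m => Iff.rfl)
    rw [Nat.card_congr ee, card_colv_mem hq V]
  -- injectivity of the generator map
  have hinj : Function.Injective (evalMap cols) := by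
    rw [← LinearMap.ker_eq_bot]
    rw [Submodule.eq_bot_iff]
    intro x hx
    by_contra hx0
    have hall : ∀ z : ColIdx F k s t u, colv z ∈ perp (Submodule.span F {x}) := by
      intro z
      rw [mem_perp]
      intro w hw
      obtain ⟨c, rfl⟩ := Submodule.mem_span_singleton.mp hw
      have hz : evalMap cols x (e.symm z) = 0 := by
        rw [LinearMap.mem_ker] at hx
        rw [hx]
        rfl
      have hz2 : ∑ jj, x jj * colv z jj = 0 := by
        have : cols (e.symm z) = colv z := by simp [hcols]
        simpa [evalMap, this] using hz
      have : ∀ jj : Fin k, (c • x) jj * colv z jj = c * (x jj * colv z jj) := by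
        intro jj
        simp [mul_assoc]
      rw [Finset.sum_congr rfl (fun jj _ => this jj), ← Finset.mul_sum, hz2, mul_zero]
    set H := perp (Submodule.span F {x}) with hH
    have hHrank : finrank F ↥H = k - 1 := by
      rw [hH, finrank_perp, finrank_span_singleton hx0]
    set τ₀ : Fin t := ⟨t - 1, by omega⟩ with hτ₀
    have hsub : ∀ v : Fin k → F, (PMonic v ∧ v ∉ excl F k s u τ₀.1) → (PMonic v ∧ v ∈ H) := by
      rintro v ⟨h1, h2⟩
      exact ⟨h1, hall ⟨τ₀, ⟨v, h1, h2⟩⟩⟩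
    have hcard_le : Nat.card {v : Fin k → F // PMonic v ∧ v ∉ excl F k s u τ₀.1}
        ≤ Nat.card {v : Fin k → F // PMonic v ∧ v ∈ H} := by
      rw [Nat.card_eq_fintype_card, Nat.card_eq_fintype_card]
      exact Fintype.card_subtype_mono _ _ hsub
    have hc1 : Nat.card {v : Fin k → F // PMonic v ∧ v ∉ excl F k s u τ₀.1}
        = gsum q k - gsum q (finrank F ↥(excl F k s u τ₀.1)) := by
      rw [card_and_not (fun v => PMonic v) (fun v => v ∈ excl F k s u τ₀.1)]
      have hA : Nat.card {v : Fin k → F // PMonic v} = gsum q k := by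
        have e4 : {v : Fin k → F // PMonic v} ≃
            {v : Fin k → F // PMonic v ∧ v ∈ (⊤ : Submodule F (Fin k → F))} :=
          Equiv.subtypeEquivRight (fun v => by simp)
        rw [Nat.card_congr e4, card_pmonic hq, finrank_top, finrank_pi, Fintype.card_fin]
      rw [hA, card_pmonic hq]
    have hc2 : Nat.card {v : Fin k → F // PMonic v ∧ v ∈ H} = gsum q (k - 1) := by
      rw [card_pmonic hq, hHrank]
    have hfE : finrank F ↥(excl F k s u τ₀.1) ≤ k - 1 := by
      rw [hfre]
      split
      · exact by have := huik (τ₀.1 + 1) (by omega); omega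
      · omega
    have hgE : gsum q (finrank F ↥(excl F k s u τ₀.1)) ≤ gsum q (k - 1) :=
      gsum_mono q hfE
    have hNk : gsum q k = gsum q (k - 1) + q ^ (k - 1) := by
      have h6 := gsum_succ q (k - 1)
      have hkk : k - 1 + 1 = k := by omega
      rw [hkk] at h6
      exact h6
    have hNle : gsum q (k - 1) ≤ q ^ (k - 1) - 1 := gsum_le hq2 _
    have hp1 : 1 ≤ q ^ (k - 1) := Nat.one_le_pow _ _ (by omega)
    rw [hc1, hc2] at hcard_le
    omega
  refine ⟨LinearMap.range (evalMap cols), ?_, ?_⟩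
  · rw [LinearMap.finrank_range_of_inj hinj, finrank_pi, Fintype.card_fin]
  intro r hr1 hrk
  -- the index j
  set jr := sSup {i : ℕ | i ≤ s ∧ u i ≤ r} with hjr
  have hjmem : jr ∈ {i : ℕ | i ≤ s ∧ u i ≤ r} :=
    Nat.sSup_mem ⟨0, by constructor; omega; rw [hu0]; omega⟩ ⟨s, fun i hi => hi.1⟩
  have hjs : jr ≤ s := hjmem.1
  have hjrle : u jr ≤ r := hjmem.2
  -- sum over Icc (jr+1) s equals sum over Icc 1 s
  have hB' : ∑ i ∈ Finset.Icc (jr + 1) s, gsum q (u i - r)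
      = ∑ i ∈ Finset.Icc 1 s, gsum q (u i - r) := by
    have hsplit : (∑ i ∈ Finset.Ioc 0 jr, gsum q (u i - r))
        + ∑ i ∈ Finset.Ioc jr s, gsum q (u i - r)
        = ∑ i ∈ Finset.Ioc 0 s, gsum q (u i - r) :=
      Finset.sum_Ioc_consecutive _ (Nat.zero_le jr) hjs
    rw [Finset.Icc_add_one_left_eq_Ioc, ← zero_add 1, Finset.Icc_add_one_left_eq_Ioc, ← hsplit]
    have hzero : ∑ i ∈ Finset.Ioc 0 jr, gsum q (u i - r) = 0 :=
      Finset.sum_eq_zero (fun i hi => by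
        have hui : u i ≤ r :=
          le_trans (hmono i jr (Finset.mem_Ioc.mp hi).2 (by omega)) hjrle
        have h0 : u i - r = 0 := by omega
        rw [h0]
        simp [gsum])
    omega
  -- count for a perp subspace of dimension k - r
  have hcnt_le : ∀ V : Submodule F (Fin k → F), finrank F ↥V = k - r →
      Nat.card {m : Fin n // cols m ∈ V}
        ≤ t * gsum q (k - r) - ∑ i ∈ Finset.Icc 1 s, gsum q (u i - r) := by
    intro V hV
    rw [hcols_count V, hV]
    have hterm : ∀ τ ∈ Finset.range t,
        gsum q (k - r) - gsum q (finrank F ↥(V ⊓ excl F k s u τ))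
          ≤ gsum q (k - r) - (if τ + 1 ≤ s then gsum q (u (τ + 1) - r) else 0) := by
      intro τ _
      apply Nat.sub_le_sub_left
      split
      case isTrue h =>
        have hsum := Submodule.finrank_sup_add_finrank_inf_eq V (band F k 0 (u (τ + 1)))
        have h1 : finrank F ↥(V ⊔ band F k 0 (u (τ + 1))) ≤ k := by
          refine le_trans (Submodule.finrank_le _) ?_
          rw [finrank_pi, Fintype.card_fin]
        have h2 : finrank F ↥(band F k 0 (u (τ + 1))) = u (τ + 1) := by
          rw [finrank_band (le_of_lt (huik (τ + 1) h))]
          omega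
        have h3 : u (τ + 1) - r ≤ finrank F ↥(V ⊓ band F k 0 (u (τ + 1))) := by omega
        have h4 : excl F k s u τ = band F k 0 (u (τ + 1)) := by rw [excl, if_pos h]
        rw [h4]
        exact gsum_mono q h3
      case isFalse h =>
        exact Nat.zero_le _
    refine le_trans (Finset.sum_le_sum hterm) ?_
    rw [sum_sub_const (by
      intro τ _
      split
      case isTrue h =>
        exact gsum_mono q (by have := huik (τ + 1) h; omega)
      case isFalse h => exact Nat.zero_le _),
      sum_ite_shift (fun i => gsum q (u i - r)) hst]
  -- exact count for the chosen subspace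
  have hcnt_eq : Nat.card {m : Fin n // cols m ∈ band F k r k}
      = t * gsum q (k - r) - ∑ i ∈ Finset.Icc 1 s, gsum q (u i - r) := by
    rw [hcols_count (band F k r k)]
    have hfrV : finrank F ↥(band F k r k) = k - r := finrank_band (le_refl k)
    have hterm : ∀ τ ∈ Finset.range t,
        gsum q (finrank F ↥(band F k r k)) - gsum q (finrank F ↥(band F k r k ⊓ excl F k s u τ))
          = gsum q (k - r) - (if τ + 1 ≤ s then gsum q (u (τ + 1) - r) else 0) := by
      intro τ _
      rw [hfrV]
      congr 1
      by_cases h : τ + 1 ≤ s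
      · rw [if_pos h]
        have h4 : excl F k s u τ = band F k 0 (u (τ + 1)) := by rw [excl, if_pos h]
        rw [h4, band_inf_band (le_of_lt (huik (τ + 1) h)),
          finrank_band (le_of_lt (huik (τ + 1) h))]
      · rw [if_neg h]
        have h4 : excl F k s u τ = ⊥ := by rw [excl, if_neg h]
        rw [h4, inf_bot_eq, finrank_bot]
        simp [gsum]
    rw [Finset.sum_congr rfl hterm, sum_sub_const (by
      intro τ _
      split
      case isTrue h =>
        exact gsum_mono q (by have := huik (τ + 1) h; omega)
      case isFalse h => exact Nat.zero_le _),
      sum_ite_shift (fun i => gsum q (u i - r)) hst]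
  -- the witness subcode
  have hW0le : (band F k 0 r).map (evalMap cols) ≤ LinearMap.range (evalMap cols) :=
    LinearMap.map_le_range
  have hW0rank : finrank F ↥((band F k 0 r).map (evalMap cols)) = r := by
    rw [← LinearEquiv.finrank_eq (Submodule.equivMapOfInjective (evalMap cols) hinj
      (band F k 0 r)), finrank_band hrk]
    omega
  have hsupp0 : suppWt ((band F k 0 r).map (evalMap cols))
      = n - (t * gsum q (k - r) - ∑ i ∈ Finset.Icc 1 s, gsum q (u i - r)) := by
    rw [suppWt_map cols (band F k 0 r), perp_band r hrk, hcnt_eq]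
  -- arithmetic facts
  have hNk : gsum q k = gsum q (k - 1) + q ^ (k - 1) := by
    have h6 := gsum_succ q (k - 1)
    have hkk : k - 1 + 1 = k := by omega
    rw [hkk] at h6
    exact h6
  have hNle : gsum q (k - 1) ≤ q ^ (k - 1) - 1 := gsum_le hq2 _
  have hp1 : 1 ≤ q ^ (k - 1) := Nat.one_le_pow _ _ (by omega)
  have hNkr : gsum q (k - r) ≤ gsum q (k - 1) := gsum_mono q (by omega)
  have hterm_le : ∀ i ∈ Finset.Icc 1 s, gsum q (u i) ≤ gsum q k - gsum q (k - r) := by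
    intro i hi
    have h1 : gsum q (u i) ≤ gsum q (k - 1) :=
      gsum_mono q (by have := huik i (Finset.mem_Icc.mp hi).2; omega)
    omega
  have hBle : ∑ i ∈ Finset.Icc 1 s, gsum q (u i) ≤ t * (gsum q k - gsum q (k - r)) := by
    calc ∑ i ∈ Finset.Icc 1 s, gsum q (u i)
        ≤ ∑ _i ∈ Finset.Icc 1 s, (gsum q k - gsum q (k - r)) := Finset.sum_le_sum hterm_le
      _ = s * (gsum q k - gsum q (k - r)) := by
          rw [Finset.sum_const, Nat.card_Icc, smul_eq_mul, Nat.add_sub_cancel]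
      _ ≤ t * (gsum q k - gsum q (k - r)) := Nat.mul_le_mul_right _ hst
  have hB'B : ∑ i ∈ Finset.Icc 1 s, gsum q (u i - r) ≤ ∑ i ∈ Finset.Icc 1 s, gsum q (u i) :=
    Finset.sum_le_sum (fun i _ => gsum_mono q (Nat.sub_le _ _))
  have hB'A' : ∑ i ∈ Finset.Icc 1 s, gsum q (u i - r) ≤ t * gsum q (k - r) := by
    calc ∑ i ∈ Finset.Icc 1 s, gsum q (u i - r)
        ≤ ∑ _i ∈ Finset.Icc 1 s, gsum q (k - r) :=
          Finset.sum_le_sum (fun i hi => gsum_mono q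
            (by have := huik i (Finset.mem_Icc.mp hi).2; omega))
      _ = s * gsum q (k - r) := by
          rw [Finset.sum_const, Nat.card_Icc, smul_eq_mul, Nat.add_sub_cancel]
      _ ≤ t * gsum q (k - r) := Nat.mul_le_mul_right _ hst
  have hmul : t * (gsum q k - gsum q (k - r)) = t * gsum q k - t * gsum q (k - r) :=
    Nat.mul_sub t _ _
  have hA'A : t * gsum q (k - r) ≤ t * gsum q k :=
    Nat.mul_le_mul_left _ (gsum_mono q (by omega))
  have hn' : n = t * gsum q k - ∑ i ∈ Finset.Icc 1 s, gsum q (u i) := by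
    rw [hn, hdivk, hBsum]
  -- rewrite the target value
  rw [pow_sub_div hq2 (Nat.sub_le k r), hBsum,
    Finset.sum_congr rfl (fun (i : ℕ) _ => hdivu (u i - r)), hB']
  -- final value
  have hval : n - (t * gsum q (k - r) - ∑ i ∈ Finset.Icc 1 s, gsum q (u i - r))
      = t * (gsum q k - gsum q (k - r)) - (∑ i ∈ Finset.Icc 1 s, gsum q (u i))
        + ∑ i ∈ Finset.Icc 1 s, gsum q (u i - r) := by
    rw [hn', hmul]
    omega
  rw [ghw, ← hval]
  apply le_antisymm
  · exact Nat.sInf_le ⟨(band F k 0 r).map (evalMap cols), hW0le, hW0rank, hsupp0⟩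
  · refine le_csInf ⟨n - (t * gsum q (k - r) - ∑ i ∈ Finset.Icc 1 s, gsum q (u i - r)),
      (band F k 0 r).map (evalMap cols), hW0le, hW0rank, hsupp0⟩ ?_
    rintro w ⟨U, hUC, hUr, rfl⟩
    have hUeq : (Submodule.comap (evalMap cols) U).map (evalMap cols) = U :=
      Submodule.map_comap_eq_self hUC
    have hWrank : finrank F ↥(Submodule.comap (evalMap cols) U) = r := by
      have h5 := LinearEquiv.finrank_eq
        (Submodule.equivMapOfInjective (evalMap cols) hinj (Submodule.comap (evalMap cols) U))
      rw [hUeq] at h5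
      omega
    have hsupp : suppWt U
        = n - Nat.card {m : Fin n // cols m ∈ perp (Submodule.comap (evalMap cols) U)} := by
      conv_lhs => rw [← hUeq]
      exact suppWt_map cols _
    have hfrperp : finrank F ↥(perp (Submodule.comap (evalMap cols) U)) = k - r := by
      rw [finrank_perp, hWrank]
    have hcnt := hcnt_le _ hfrperp
    rw [hsupp]
    exact Nat.sub_le_sub_left hcnt n
end

section
/- Let q be a prime power and let integers satisfy 1 ≤ u_1 < k and 1 ≤ t. Set n = t(q^k - 1)/(q - 1) - (q^{u_1} - 1)/(q - 1) and d = t·q^{k-1} - q^{u_1 - 1}. Then there exists an [n,k]_q linear code C with minimum Hamming distance d such that for every 1 ≤ r ≤ k, the number of integers j with A_j^r(C) ≠ 0 is at most min{u_1 + 1, r + 1, k - r + 1, k - u_1 + 1}. -/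
open Finset

/-
The code has as columns `t` copies of every point of `ℙ(F^k)`, with the points of a
`u1`-dimensional subspace `U` removed once. Its codewords are the values of the functionals `φ` on
the columns, so the support of the subcode of an `r`-dimensional space `M` of functionals is the set
of columns off its annihilator `W` (of dimension `k - r`). Counting points, its support weight is
`t([k] - [k - r]) - ([u1] - [e])` with `[a] = (q^a - 1)/(q - 1)` and `e = dim (U ⊓ W)`; it
depends only on `e`, which ranges over `u1 - r ≤ e ≤ min u1 (k - r)`. For `r = 1` the two
possible values are `t q^(k-1) - q^(u1-1)` and `t q^(k-1)`, the first attained by any `φ` not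
vanishing on `U`.
-/

open Module
open scoped LinearAlgebra.Projectivization

theorem Nat.card_subtype_and_add_card_subtype_and_not {α : Type*} [Finite α] (p q : α → Prop) :
    Nat.card {a // p a ∧ q a} + Nat.card {a // p a ∧ ¬ q a} = Nat.card {a // p a} :=
  Set.ncard_inter_add_ncard_sdiff_eq_ncard {a | p a} {a | q a}

def numProjPoints (q a : ℕ) : ℕ := (q ^ a - 1) / (q - 1)

theorem numProjPoints_succ {q : ℕ} (hq : 2 ≤ q) (a : ℕ) :
    numProjPoints q (a + 1) = numProjPoints q a + q ^ a := by
  simp only [numProjPoints, ← Nat.geomSum_eq hq, Finset.sum_range_succ]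

theorem numProjPoints_mono {q : ℕ} (hq : 2 ≤ q) : Monotone (numProjPoints q) := by
  intro a b hab
  simp only [numProjPoints, ← Nat.geomSum_eq hq]
  exact Finset.sum_le_sum_of_subset (Finset.range_mono hab)

-- Support weight of a subcode whose annihilator has dimension `w` and meets `U` in dimension `e`;
-- the grouping keeps every truncated subtraction exact for the values that occur.
def projSubcodeWt (q t k u w e : ℕ) : ℕ :=
  t * numProjPoints q k - numProjPoints q u - (t * numProjPoints q w - numProjPoints q e)

theorem projSubcodeWt_pred {q t k u e : ℕ} (hq : 2 ≤ q) (ht : 1 ≤ t) (hek : e < k)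
    (heu : e ≤ u) (hue : u ≤ e + 1) :
    projSubcodeWt q t k u (k - 1) e
      = t * q ^ (k - 1) - (numProjPoints q u - numProjPoints q e) := by
  obtain ⟨k, rfl⟩ : ∃ k', k = k' + 1 := ⟨k - 1, by omega⟩
  have hθe : numProjPoints q e ≤ t * numProjPoints q k :=
    (numProjPoints_mono hq (by omega)).trans (Nat.le_mul_of_pos_left _ ht)
  have hqe : q ^ e ≤ t * q ^ k :=
    (Nat.pow_le_pow_right (by omega) (by omega)).trans (Nat.le_mul_of_pos_left _ ht)
  rw [projSubcodeWt, Nat.add_sub_cancel, numProjPoints_succ hq, mul_add]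
  obtain rfl | rfl : u = e ∨ u = e + 1 := by omega
  · omega
  · rw [numProjPoints_succ hq]
    omega

theorem Submodule.finrank_add_finrank_le_finrank_add_finrank_inf {K V : Type*} [DivisionRing K]
    [AddCommGroup V] [Module K V] [FiniteDimensional K V] (A B : Submodule K V) :
    finrank K A + finrank K B ≤ finrank K V + finrank K ↥(A ⊓ B) := by
  rw [← Submodule.finrank_sup_add_finrank_inf_eq]
  exact Nat.add_le_add_right (Submodule.finrank_le _) _

theorem Submodule.exists_finrank_eq {K V : Type*} [DivisionRing K] [AddCommGroup V] [Module K V]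
    [FiniteDimensional K V] {u : ℕ} (hu : u ≤ finrank K V) :
    ∃ U : Submodule K V, finrank K U = u := by
  let b := Module.finBasis K V
  refine ⟨span K (Set.range (b ∘ Fin.castLE hu)), ?_⟩
  rw [finrank_span_eq_card (b.linearIndependent.comp _ (Fin.castLE_injective hu)),
    Fintype.card_fin]

theorem Submodule.dualCoannihilator_span_singleton {K V : Type*} [Field K] [AddCommGroup V]
    [Module K V] (φ : Dual K V) : (K ∙ φ).dualCoannihilator = LinearMap.ker φ :=
  SetLike.ext' (by ext; simp)

section Points

variable {F V : Type*} [Field F] [AddCommGroup V] [Module F V]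

theorem Projectivization.rep_mem_iff_mem_range_map (A : Submodule F V) (p : ℙ F V) :
    p.rep ∈ A ↔ p ∈ Set.range (Projectivization.map A.subtype A.injective_subtype) := by
  constructor
  · intro h
    refine ⟨Projectivization.mk F ⟨p.rep, h⟩
      fun h0 => p.rep_nonzero (congrArg Subtype.val h0), ?_⟩
    rw [Projectivization.map_mk]
    exact Projectivization.mk_rep p
  · rintro ⟨x, rfl⟩
    induction x using Projectivization.ind with
    | h v hv =>
      rw [Projectivization.map_mk]
      obtain ⟨a, ha⟩ :=
        Projectivization.exists_smul_eq_mk_rep F (A.subtype v) (by simpa using hv)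
      rw [← ha]
      exact A.smul_mem_iff' a |>.mpr v.2

-- `t` copies of `ℙ V` with the points of `U` removed once: one copy of the points off `U`
-- together with `t - 1` copies of all points.
abbrev ColumnIndex (t : ℕ) (U : Submodule F V) : Type _ :=
  {p : ℙ F V // p.rep ∉ U} ⊕ (Fin (t - 1) × ℙ F V)

def ColumnIndex.point {t : ℕ} {U : Submodule F V} : ColumnIndex t U → ℙ F V :=
  Sum.elim Subtype.val Prod.snd

variable [Fintype F] [FiniteDimensional F V]

instance : Finite (ℙ F V) :=
  have : Finite V := Module.finite_of_finite F
  inferInstance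

theorem Projectivization.card_rep_mem (A : Submodule F V) :
    Nat.card {p : ℙ F V // p.rep ∈ A} = numProjPoints (Fintype.card F) (finrank F A) := by
  rw [Nat.card_congr (Equiv.subtypeEquivRight (Projectivization.rep_mem_iff_mem_range_map A)),
    Nat.card_range_of_injective (Projectivization.map_injective _ _), Projectivization.card'',
    Module.natCard_eq_pow_finrank (K := F), Nat.card_eq_fintype_card, numProjPoints]

theorem ColumnIndex.card_point_rep_mem {t : ℕ} (ht : 1 ≤ t) (U X : Submodule F V) :
    Nat.card {i : ColumnIndex t U // i.point.rep ∈ X} =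
      t * numProjPoints (Fintype.card F) (finrank F X)
        - numProjPoints (Fintype.card F) (finrank F ↥(U ⊓ X)) := by
  obtain ⟨s, rfl⟩ : ∃ s, t = s + 1 := ⟨t - 1, by omega⟩
  have hsplit := Nat.card_subtype_and_add_card_subtype_and_not
    (fun p : ℙ F V => p.rep ∈ X) (fun p => p.rep ∈ U)
  have hUX : {p : ℙ F V // p.rep ∈ X ∧ p.rep ∈ U} = {p : ℙ F V // p.rep ∈ U ⊓ X} := by
    simp only [Submodule.mem_inf, and_comm]
  have hoff : Nat.card {p : {p : ℙ F V // p.rep ∉ U} // p.1.rep ∈ X}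
      = Nat.card {p : ℙ F V // p.rep ∈ X ∧ p.rep ∉ U} :=
    Nat.card_congr <|
      (Equiv.subtypeSubtypeEquivSubtypeInter _ (fun p : ℙ F V => p.rep ∈ X)).trans
        (Equiv.subtypeEquivRight fun _ => and_comm)
  have hcopies : Nat.card {b : Fin (s + 1 - 1) × ℙ F V // b.2.rep ∈ X}
      = s * Nat.card {p : ℙ F V // p.rep ∈ X} := by
    let e : {b : Fin (s + 1 - 1) × ℙ F V // b.2.rep ∈ X}
        ≃ Fin s × {p : ℙ F V // p.rep ∈ X} :=
      { toFun b := (b.1.1, ⟨b.1.2, b.2⟩)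
        invFun x := ⟨(x.1, x.2.1), x.2.2⟩ }
    rw [Nat.card_congr e, Nat.card_prod, Nat.card_fin]
  rw [Nat.card_congr Equiv.subtypeSum, Nat.card_sum]
  change Nat.card {a : {p : ℙ F V // p.rep ∉ U} // a.1.rep ∈ X}
    + Nat.card {b : Fin (s + 1 - 1) × ℙ F V // b.2.rep ∈ X} = _
  rw [hUX, Projectivization.card_rep_mem, Projectivization.card_rep_mem] at hsplit
  rw [hoff, hcopies, Projectivization.card_rep_mem, ← hsplit, add_mul, one_mul]
  omega

end Points

section EvalCode

variable {F : Type} [Field F] {V : Type*} [AddCommGroup V] [Module F V] {n : ℕ}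

theorem hwt_eq_suppWt_span (c : Fin n → F) : hwt c = suppWt (F ∙ c) := by
  refine Nat.card_congr (Equiv.subtypeEquivRight fun j =>
    ⟨fun h => ⟨c, Submodule.mem_span_singleton_self c, h⟩, ?_⟩)
  rintro ⟨x, hx, hxj⟩
  obtain ⟨a, rfl⟩ := Submodule.mem_span_singleton.mp hx
  exact right_ne_zero_of_mul hxj

def evalCode (col : Fin n → V) : Dual F V →ₗ[F] Fin n → F :=
  LinearMap.pi fun j => Dual.eval F V (col j)

theorem evalCode_apply (col : Fin n → V) (φ : Dual F V) (j : Fin n) :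
    evalCode col φ j = φ (col j) :=
  rfl

theorem suppWt_map_evalCode (col : Fin n → V) (M : Submodule F (Dual F V)) :
    suppWt (M.map (evalCode col)) = Nat.card {j // col j ∉ M.dualCoannihilator} := by
  refine Nat.card_congr (Equiv.subtypeEquivRight fun j => ?_)
  simp [Submodule.mem_dualCoannihilator, evalCode_apply]

end EvalCode

theorem exists_suppWt_map_eq {F : Type} [Field F] [Fintype F] {V : Type*} [AddCommGroup V]
    [Module F V] [FiniteDimensional F V] {t k u : ℕ} (ht : 1 ≤ t) (hk : finrank F V = k)
    (U : Submodule F V) (hu : finrank F U = u) :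
    ∃ G : Dual F V →ₗ[F]
        (Fin (t * numProjPoints (Fintype.card F) k - numProjPoints (Fintype.card F) u) → F),
      ∀ M : Submodule F (Dual F V), suppWt (M.map G) = projSubcodeWt (Fintype.card F) t k u
        (finrank F M.dualCoannihilator) (finrank F ↥(U ⊓ M.dualCoannihilator)) := by
  subst hk hu
  have hcard : Nat.card (ColumnIndex t U) = t * numProjPoints (Fintype.card F) (finrank F V)
      - numProjPoints (Fintype.card F) (finrank F U) := by
    rw [← Nat.card_congr (Equiv.subtypeUnivEquiv fun i =>
        Submodule.mem_top (R := F) (x := i.point.rep)),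
      ColumnIndex.card_point_rep_mem ht, finrank_top, inf_top_eq]
  let σ := Finite.equivFinOfCardEq hcard
  refine ⟨evalCode fun j => (σ.symm j).point.rep, fun M => ?_⟩
  rw [suppWt_map_evalCode, Nat.card_congr (σ.symm.subtypeEquiv
    (q := fun i : ColumnIndex t U => i.point.rep ∉ M.dualCoannihilator) fun _ => Iff.rfl),
    projSubcodeWt, ← ColumnIndex.card_point_rep_mem ht, ← hcard]
  exact Set.ncard_compl {i : ColumnIndex t U | i.point.rep ∈ M.dualCoannihilator}

section ProjectiveCode

variable {F : Type} [Field F] [Fintype F] {V : Type*} [AddCommGroup V] [Module F V]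
  [FiniteDimensional F V] {t k u n : ℕ} {U : Submodule F V} {G : Dual F V →ₗ[F] Fin n → F}

open scoped Classical in
theorem hwt_apply_eq_of_suppWt_map
    (hG : ∀ M : Submodule F (Dual F V), suppWt (M.map G) = projSubcodeWt (Fintype.card F) t k u
      (finrank F M.dualCoannihilator) (finrank F ↥(U ⊓ M.dualCoannihilator)))
    (ht : 1 ≤ t) (hk : finrank F V = k) (hu : finrank F U = u) {φ : Dual F V} (hφ : φ ≠ 0) :
    hwt (G φ) = t * Fintype.card F ^ (k - 1)
      - if U ≤ LinearMap.ker φ then 0 else Fintype.card F ^ (u - 1) := by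
  have hq : 2 ≤ Fintype.card F := Fintype.one_lt_card
  have hW := Subspace.finrank_add_finrank_dualCoannihilator_eq (F ∙ φ)
  rw [finrank_span_singleton hφ, Submodule.dualCoannihilator_span_singleton] at hW
  have hUWW : finrank F ↥(U ⊓ LinearMap.ker φ) ≤ finrank F (LinearMap.ker φ) :=
    Submodule.finrank_mono inf_le_right
  have hlow := Submodule.finrank_add_finrank_le_finrank_add_finrank_inf U (LinearMap.ker φ)
  have hUW : finrank F ↥(U ⊓ LinearMap.ker φ) ≤ u :=
    hu ▸ Submodule.finrank_mono inf_le_left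
  rw [hwt_eq_suppWt_span, ← Set.image_singleton, ← Submodule.map_span, hG,
    Submodule.dualCoannihilator_span_singleton, show finrank F (LinearMap.ker φ) = k - 1 by omega,
    projSubcodeWt_pred hq ht (by omega) hUW (by omega)]
  split_ifs with hle
  · rw [inf_eq_left.mpr hle, hu, Nat.sub_self]
  · have hlt := Submodule.finrank_lt_finrank_of_lt (inf_lt_left.mpr hle)
    obtain rfl : finrank F ↥(U ⊓ LinearMap.ker φ) + 1 = u := by omega
    rw [numProjPoints_succ hq, Nat.add_sub_cancel_left, Nat.add_sub_cancel]

theorem injective_of_suppWt_map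
    (hG : ∀ M : Submodule F (Dual F V), suppWt (M.map G) = projSubcodeWt (Fintype.card F) t k u
      (finrank F M.dualCoannihilator) (finrank F ↥(U ⊓ M.dualCoannihilator)))
    (ht : 1 ≤ t) (hk : finrank F V = k) (hu : finrank F U = u) (hu1 : 1 ≤ u) (huk : u < k) :
    Function.Injective G := by
  have hq : 2 ≤ Fintype.card F := Fintype.one_lt_card
  have hpow : Fintype.card F ^ (u - 1) < t * Fintype.card F ^ (k - 1) :=
    (Nat.pow_lt_pow_right hq (by omega)).trans_le (Nat.le_mul_of_pos_left _ ht)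
  refine (injective_iff_map_eq_zero G).mpr fun φ hφ => ?_
  by_contra hne
  have h := hwt_apply_eq_of_suppWt_map hG ht hk hu hne
  rw [hφ] at h
  simp only [hwt, Pi.zero_apply, ne_eq, not_true_eq_false, Nat.card_of_isEmpty] at h
  split_ifs at h <;> omega

theorem minDist_range_of_suppWt_map
    (hG : ∀ M : Submodule F (Dual F V), suppWt (M.map G) = projSubcodeWt (Fintype.card F) t k u
      (finrank F M.dualCoannihilator) (finrank F ↥(U ⊓ M.dualCoannihilator)))
    (ht : 1 ≤ t) (hk : finrank F V = k) (hu : finrank F U = u) (hu1 : 1 ≤ u) (huk : u < k) :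
    minDist (LinearMap.range G) = t * Fintype.card F ^ (k - 1) - Fintype.card F ^ (u - 1) := by
  have hinj := injective_of_suppWt_map hG ht hk hu hu1 huk
  refine IsLeast.csInf_eq ⟨?_, ?_⟩
  · have hU : U ≠ ⊥ := by
      rintro rfl
      rw [finrank_bot] at hu
      omega
    obtain ⟨x, hxU, hx0⟩ := Submodule.exists_mem_ne_zero_of_ne_bot hU
    obtain ⟨φ, hφx⟩ : ∃ φ : Dual F V, φ x ≠ 0 := by
      by_contra! h
      exact hx0 ((forall_dual_apply_eq_zero_iff F x).mp h)
    have hφ : φ ≠ 0 := by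
      rintro rfl
      exact hφx rfl
    refine ⟨G φ, LinearMap.mem_range_self G φ, (map_ne_zero_iff G hinj).mpr hφ, ?_⟩
    rw [hwt_apply_eq_of_suppWt_map hG ht hk hu hφ, if_neg fun hle => hφx (hle hxU)]
  · rintro _ ⟨_, ⟨φ, rfl⟩, hc, rfl⟩
    have hφ : φ ≠ 0 := by
      rintro rfl
      exact hc (map_zero G)
    rw [hwt_apply_eq_of_suppWt_map hG ht hk hu hφ]
    split_ifs <;> omega

theorem ncard_sswd_ne_zero_le_of_suppWt_map
    (hG : ∀ M : Submodule F (Dual F V), suppWt (M.map G) = projSubcodeWt (Fintype.card F) t k u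
      (finrank F M.dualCoannihilator) (finrank F ↥(U ⊓ M.dualCoannihilator)))
    (hinj : Function.Injective G) (hk : finrank F V = k) (hu : finrank F U = u) (r : ℕ) :
    {j | sswd (LinearMap.range G) r j ≠ 0}.ncard ≤ min u (k - r) + 1 - (u - r) := by
  have hsub : {j | sswd (LinearMap.range G) r j ≠ 0} ⊆
      projSubcodeWt (Fintype.card F) t k u (k - r) '' Set.Icc (u - r) (min u (k - r)) := by
    intro j hj
    obtain ⟨⟨C', hC', hC'r, rfl⟩⟩ := (Nat.card_ne_zero.mp hj).1
    have hmap : (C'.comap G).map G = C' := Submodule.map_comap_eq_self hC'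
    have hW := Subspace.finrank_add_finrank_dualCoannihilator_eq (C'.comap G)
    rw [(Submodule.equivMapOfInjective G hinj _).finrank_eq, hmap, hC'r] at hW
    set W := (C'.comap G).dualCoannihilator
    have hlow := Submodule.finrank_add_finrank_le_finrank_add_finrank_inf U W
    have hUW : finrank F ↥(U ⊓ W) ≤ u := hu ▸ Submodule.finrank_mono inf_le_left
    have hUWW : finrank F ↥(U ⊓ W) ≤ finrank F W := Submodule.finrank_mono inf_le_right
    refine ⟨finrank F ↥(U ⊓ W), ⟨by omega, by omega⟩, ?_⟩
    rw [← hmap, hG, show finrank F W = k - r by omega]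
  calc _ ≤ _ := Set.ncard_le_ncard hsub ((Set.finite_Icc _ _).image _)
    _ ≤ (Set.Icc (u - r) (min u (k - r))).ncard := Set.ncard_image_le (Set.finite_Icc _ _)
    _ = _ := by simp

end ProjectiveCode

/-- Corollary `2a`: the `s = 1` case of Theorem `xxd2` gives a code whose
`r`-subcode support weight distribution has few nonzero entries. -/
theorem stmt_5 (q : ℕ) (F : Type) [Field F] [Fintype F] (hq : Fintype.card F = q)
    (k u1 t : ℕ) (hu1 : 1 ≤ u1) (hu1k : u1 < k) (ht : 1 ≤ t) :
    ∃ C : Submodule F (Fin (t * ((q ^ k - 1) / (q - 1)) - (q ^ u1 - 1) / (q - 1)) → F),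
      Module.finrank F ↥C = k ∧
      minDist C = t * q ^ (k - 1) - q ^ (u1 - 1) ∧
      ∀ r, 1 ≤ r → r ≤ k →
        {j : ℕ | sswd C r j ≠ 0}.ncard ≤
          min (u1 + 1) (min (r + 1) (min (k - r + 1) (k - u1 + 1))) := by
  subst hq
  have hk : finrank F (Fin k → F) = k := finrank_fin_fun F
  obtain ⟨U, hU⟩ := Submodule.exists_finrank_eq (K := F) (V := Fin k → F) (hk ▸ hu1k.le)
  obtain ⟨G, hG⟩ := exists_suppWt_map_eq ht hk U hU
  have hinj := injective_of_suppWt_map hG ht hk hU hu1 hu1k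
  refine ⟨LinearMap.range G, ?_, minDist_range_of_suppWt_map hG ht hk hU hu1 hu1k,
    fun r _ _ => (ncard_sswd_ne_zero_le_of_suppWt_map hG hinj hk hU r).trans (by omega)⟩
  exact (LinearMap.finrank_range_of_inj hinj).trans (Subspace.dual_finrank_eq.trans hk)
end
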